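/- arXiv:1804.06356 — 10 statements merged into one kernel-verified Lean document; each statement's English description precedes it below -/
import Mathlib

section
/- Let A = O_C[[X]] be the power series ring over O_C. Then every prime ideal 𝔭 of A satisfies at least one of the following: (i) 𝔭 is contained in 𝔭_crys := {Σ_{n≥0} a_n X^n : a_n ∈ m_C for all n}; (ii) 𝔭 equals 𝔪 := {Σ_{n≥0} a_n X^n : a_0 ∈ m_C} (the unique maximal ideal of A); (iii) 𝔭 is the principal ideal generated by X − c for some c ∈ m_C. -/
/-!
If some `f ∈ 𝔭` has a coefficient of norm one, let `m` be the first such index. The coefficients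
below `m` all lie in `ϖ O_C` for a single `ϖ` of norm `< 1`, and `O_C` is `ϖ`-adically complete,
so Weierstrass division of `X ^ m` by `f` puts a monic polynomial into `𝔭`. Its roots in `C` are
integral over `O_C`, hence lie in `O_C`, so it is a product of factors `X - c`; one of them lies in
`𝔭`, and `|c| < 1` because `𝔭` is proper. Division by `X - c` identifies `O_C⟦X⟧ ⧸ (X - c)` with
`O_C`, so `𝔭` corresponds to a prime of the rank-one valuation ring `O_C`, which is `0` or `m_C`:
these give `𝔭 = (X - c)` and `𝔭 = 𝔪` respectively.
-/

noncomputable section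

def OC (C : Type) [NormedField C] (hna : IsNonarchimedean (norm : C → ℝ)) : Subring C where
  carrier := {x : C | ‖x‖ ≤ 1}
  mul_mem' := fun {a b} (ha : ‖a‖ ≤ 1) (hb : ‖b‖ ≤ 1) => by
    have : ‖a * b‖ = ‖a‖ * ‖b‖ := norm_mul a b
    simp only [Set.mem_setOf_eq, this]
    nlinarith [norm_nonneg a, norm_nonneg b]
  one_mem' := by simp
  add_mem' := fun {a b} (ha : ‖a‖ ≤ 1) (hb : ‖b‖ ≤ 1) =>
    le_trans (hna a b) (max_le ha hb)
  zero_mem' := by simp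
  neg_mem' := fun {a} (ha : ‖a‖ ≤ 1) => by simpa using ha

open PowerSeries
open scoped Polynomial

theorem norm_add_lt_iff_of_norm_right_lt {E : Type*} [SeminormedAddGroup E] [IsUltrametricDist E]
    {x y : E} {r : ℝ} (hy : ‖y‖ < r) : ‖x + y‖ < r ↔ ‖x‖ < r := by
  refine ⟨fun h ↦ ?_, fun h ↦ (IsUltrametricDist.norm_add_le_max x y).trans_lt (max_lt h hy)⟩
  simpa using
    (IsUltrametricDist.norm_add_le_max (x + y) (-y)).trans_lt (max_lt h (by rwa [norm_neg]))

namespace PowerSeries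

variable {A : Type*} [CommRing A] {I : Ideal A} {f : A⟦X⟧} {m : ℕ}

theorem order_map_mk_eq_of_coeff_mem (hI : I ≠ ⊤) (hlow : ∀ i < m, coeff i f ∈ I)
    (hm : IsUnit (coeff m f)) : (f.map (Ideal.Quotient.mk I)).order = m := by
  refine order_eq_nat.2 ⟨fun h ↦ hI (I.eq_top_of_isUnit_mem ?_ hm), fun i hi ↦ ?_⟩
  · rwa [coeff_map, Ideal.Quotient.eq_zero_iff_mem] at h
  · rw [coeff_map, Ideal.Quotient.eq_zero_iff_mem]
    exact hlow i hi

theorem exists_eq_mul_add_of_coeff_mem [IsAdicComplete I A] (hI : I ≠ ⊤)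
    (hlow : ∀ i < m, coeff i f ∈ I) (hm : IsUnit (coeff m f)) (g : A⟦X⟧) :
    ∃ (q : A⟦X⟧) (r : A[X]), r.degree < m ∧ g = f * q + r := by
  have horder := order_map_mk_eq_of_coeff_mem hI hlow hm
  have H : f.IsWeierstrassDivisorAt I := by
    rwa [IsWeierstrassDivisorAt, horder, ENat.toNat_natCast]
  obtain ⟨hdeg, heq⟩ := H.isWeierstrassDivisionAt_div_mod g
  rw [horder, ENat.toNat_natCast] at hdeg
  exact ⟨_, _, hdeg, heq⟩

theorem exists_monic_dvd_of_coeff_mem [IsAdicComplete I A] (hI : I ≠ ⊤)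
    (hlow : ∀ i < m, coeff i f ∈ I) (hm : IsUnit (coeff m f)) :
    ∃ P : A[X], P.Monic ∧ f ∣ (P : A⟦X⟧) := by
  obtain ⟨q, r, hdeg, heq⟩ := exists_eq_mul_add_of_coeff_mem hI hlow hm (X ^ m)
  refine ⟨Polynomial.X ^ m - r, Polynomial.monic_X_pow_sub hdeg, q, ?_⟩
  rw [Polynomial.coe_sub, Polynomial.coe_pow, Polynomial.coe_X, heq]
  ring

theorem exists_eq_X_sub_C_mul_add_C [IsAdicComplete I A] (hI : I ≠ ⊤) {c : A} (hc : c ∈ I)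
    (g : A⟦X⟧) : ∃ (q : A⟦X⟧) (a : A), g = (X - C c) * q + C a := by
  have hlow : ∀ i < 1, coeff i (X - C c) ∈ I := by
    intro i hi
    simpa [Nat.lt_one_iff.1 hi] using I.neg_mem hc
  obtain ⟨q, r, hdeg, heq⟩ :=
    exists_eq_mul_add_of_coeff_mem hI hlow (by simp [coeff_X]) g
  refine ⟨q, r.coeff 0, ?_⟩
  rwa [Polynomial.eq_C_of_degree_le_zero (Nat.WithBot.lt_one_iff_le_zero.1 hdeg),
    Polynomial.coe_C] at heq

theorem exists_X_sub_C_mem_of_monic_mem [Nontrivial A]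
    (hroot : ∀ P : A[X], P.Monic → P.natDegree ≠ 0 → ∃ c, P.IsRoot c)
    {𝔭 : Ideal A⟦X⟧} (h𝔭 : 𝔭.IsPrime) {P : A[X]} (hP : P.Monic) (hmem : (P : A⟦X⟧) ∈ 𝔭) :
    ∃ c, X - C c ∈ 𝔭 := by
  induction hn : P.natDegree using Nat.strong_induction_on generalizing P with
  | _ n ih =>
  by_cases hdeg : P.natDegree = 0
  · rw [Polynomial.natDegree_eq_zero_iff_degree_le_zero, hP.degree_le_zero_iff_eq_one] at hdeg
    subst hdeg
    exact absurd ((Ideal.eq_top_iff_one _).2 (by simpa using hmem)) h𝔭.ne_top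
  obtain ⟨c, hc⟩ := hroot P hP hdeg
  set Q := P /ₘ (Polynomial.X - Polynomial.C c)
  have hfactor : (Polynomial.X - Polynomial.C c) * Q = P :=
    Polynomial.mul_divByMonic_eq_iff_isRoot.2 hc
  have hQ : Q.Monic := (Polynomial.monic_X_sub_C c).of_mul_monic_left (hfactor ▸ hP)
  rw [← hfactor, Polynomial.coe_mul, Polynomial.coe_sub, Polynomial.coe_X,
    Polynomial.coe_C] at hmem
  rcases h𝔭.mem_or_mem hmem with hlin | hquot
  · exact ⟨c, hlin⟩
  · refine ih _ ?_ hQ hquot rfl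
    rw [← hn, ← hfactor, (Polynomial.monic_X_sub_C c).natDegree_mul hQ,
      Polynomial.natDegree_X_sub_C]
    omega

end PowerSeries

namespace OC

variable {K : Type} [NormedField K] [IsUltrametricDist K] {hna : IsNonarchimedean (norm : K → ℝ)}

theorem integers : (NormedField.valuation (K := K)).Integers (OC K hna) where
  hom_inj := Subtype.val_injective
  map_le_one x := x.2
  exists_of_le_one {x} hx := ⟨⟨x, hx⟩, rfl⟩

theorem isUnit_iff_norm_eq_one {x : OC K hna} : IsUnit x ↔ ‖x‖ = 1 := by
  rw [integers.isUnit_iff_valuation_eq_one, NormedField.valuation_apply, ← NNReal.coe_inj]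
  rfl

theorem not_isUnit_iff_norm_lt_one {x : OC K hna} : ¬IsUnit x ↔ ‖x‖ < 1 := by
  rw [isUnit_iff_norm_eq_one, lt_iff_le_and_ne]
  exact ⟨fun h ↦ ⟨x.2, h⟩, fun h ↦ h.2⟩

theorem dvd_iff_norm_le {x y : OC K hna} : x ∣ y ↔ ‖y‖ ≤ ‖x‖ := by
  rw [integers.dvd_iff_le, NormedField.valuation_apply, NormedField.valuation_apply,
    ← NNReal.coe_le_coe]
  rfl

theorem mem_span_singleton_pow_iff {ϖ x : OC K hna} {n : ℕ} :
    x ∈ Ideal.span {ϖ} ^ n ↔ ‖x‖ ≤ ‖ϖ‖ ^ n := by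
  rw [Ideal.span_singleton_pow, Ideal.mem_span_singleton, dvd_iff_norm_le, norm_pow]

theorem isAdicComplete_span_singleton [CompleteSpace K] {ϖ : OC K hna} (hϖ : ‖ϖ‖ < 1) :
    IsAdicComplete (Ideal.span {ϖ}) (OC K hna) := by
  have hmem (n : ℕ) (x : OC K hna) :
      x ∈ (Ideal.span {ϖ} ^ n • ⊤ : Ideal (OC K hna)) ↔ ‖x‖ ≤ ‖ϖ‖ ^ n := by
    rw [smul_eq_mul, Ideal.mul_top, mem_span_singleton_pow_iff]
  have hpow := tendsto_pow_atTop_nhds_zero_of_lt_one (norm_nonneg _) hϖ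
  refine { haus' := fun x hx ↦ ?_, prec' := fun f hf ↦ ?_ }
  · simp only [SModEq.zero, hmem] at hx
    exact norm_le_zero_iff.1 (ge_of_tendsto' hpow hx)
  · simp only [SModEq.sub_mem, hmem] at hf
    have hcauchy : CauchySeq fun n ↦ (f n : K) := by
      refine cauchySeq_of_le_geometric _ 1 hϖ fun n ↦ ?_
      rw [dist_eq_norm, one_mul]
      exact hf n.le_succ
    obtain ⟨L, hL⟩ := cauchySeq_tendsto_of_complete hcauchy
    have hL1 : ‖L‖ ≤ 1 := le_of_tendsto hL.norm (Filter.Eventually.of_forall fun n ↦ (f n).2)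
    refine ⟨⟨L, hL1⟩, fun n ↦ SModEq.sub_mem.2 ((hmem n _).2 ?_)⟩
    exact le_of_tendsto (tendsto_const_nhds.sub hL).norm
      (Filter.eventually_atTop.2 ⟨n, fun k hk ↦ hf hk⟩)

theorem exists_dvd_of_norm_lt_one {ι : Type*} (s : Finset ι) (a : ι → OC K hna)
    (ha : ∀ i ∈ s, ‖a i‖ < 1) : ∃ ϖ : OC K hna, ‖ϖ‖ < 1 ∧ ∀ i ∈ s, ϖ ∣ a i := by
  rcases s.eq_empty_or_nonempty with rfl | hs
  · exact ⟨0, by simp, by simp⟩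
  obtain ⟨j, hj, hmax⟩ := s.exists_max_image (fun i ↦ ‖a i‖) hs
  exact ⟨a j, ha j hj, fun i hi ↦ dvd_iff_norm_le.2 (hmax i hi)⟩

theorem mem_of_norm_lt_one {𝔮 : Ideal (OC K hna)} (h𝔮 : 𝔮.IsPrime) {a b : OC K hna}
    (ha : a ∈ 𝔮) (ha0 : a ≠ 0) (hb : ‖b‖ < 1) : b ∈ 𝔮 := by
  obtain ⟨N, hN⟩ := exists_pow_lt_of_lt_one (norm_pos_iff.2 ha0) hb
  have hdvd : a ∣ b ^ N := by
    rw [dvd_iff_norm_le, norm_pow]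
    exact hN.le
  exact h𝔮.mem_of_pow_mem N (𝔮.mem_of_dvd hdvd ha)

theorem exists_isRoot_of_monic [IsAlgClosed K] {P : (OC K hna)[X]} (hP : P.Monic)
    (hdeg : P.natDegree ≠ 0) : ∃ c, P.IsRoot c := by
  obtain ⟨z, hz⟩ := IsAlgClosed.exists_aeval_eq_zero K P
    (by rwa [Polynomial.degree_eq_natDegree hP.ne_zero, Nat.cast_ne_zero])
  obtain ⟨c, rfl⟩ := (integers (hna := hna)).exists_of_le_one
    (integers.isIntegral_iff_v_le_one.1 ⟨P, hP, hz⟩)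
  refine ⟨c, Subtype.val_injective ?_⟩
  rwa [Polynomial.aeval_algebraMap_apply, ← map_zero (algebraMap (OC K hna) K)] at hz

theorem exists_monic_dvd_of_norm_coeff_eq_one [CompleteSpace K] {f : (OC K hna)⟦X⟧} {n : ℕ}
    (hn : ‖coeff n f‖ = 1) : ∃ P : (OC K hna)[X], P.Monic ∧ f ∣ (P : (OC K hna)⟦X⟧) := by
  classical
  have hex : ∃ m, ‖coeff m f‖ = 1 := ⟨n, hn⟩
  obtain ⟨ϖ, hϖ, hdvd⟩ := exists_dvd_of_norm_lt_one (Finset.range (Nat.find hex))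
    (fun i ↦ coeff i f) fun i hi ↦
      lt_of_le_of_ne (coeff i f).2 (Nat.find_min hex (Finset.mem_range.1 hi))
  have := isAdicComplete_span_singleton hϖ
  refine exists_monic_dvd_of_coeff_mem (I := Ideal.span {ϖ}) ?_
    (fun i hi ↦ Ideal.mem_span_singleton.2 (hdvd i (Finset.mem_range.2 hi)))
    (isUnit_iff_norm_eq_one.2 (Nat.find_spec hex))
  rwa [Ne, Ideal.span_singleton_eq_top, not_isUnit_iff_norm_lt_one]

theorem exists_X_sub_C_mem_of_norm_coeff_eq_one [CompleteSpace K] [IsAlgClosed K]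
    {𝔭 : Ideal (OC K hna)⟦X⟧} (h𝔭 : 𝔭.IsPrime) {f : (OC K hna)⟦X⟧} (hf : f ∈ 𝔭) {n : ℕ}
    (hn : ‖coeff n f‖ = 1) : ∃ c : OC K hna, ‖c‖ < 1 ∧ X - C c ∈ 𝔭 := by
  obtain ⟨P, hP, hdvd⟩ := exists_monic_dvd_of_norm_coeff_eq_one hn
  obtain ⟨c, hc⟩ := exists_X_sub_C_mem_of_monic_mem (fun _ ↦ exists_isRoot_of_monic) h𝔭 hP
    (𝔭.mem_of_dvd hdvd hf)
  refine ⟨c, not_isUnit_iff_norm_lt_one.1 fun hu ↦ h𝔭.ne_top (𝔭.eq_top_of_isUnit_mem hc ?_), hc⟩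
  rw [isUnit_iff_constantCoeff]
  simpa using hu.neg

theorem eq_span_X_sub_C_or_forall_mem_iff [CompleteSpace K] {𝔭 : Ideal (OC K hna)⟦X⟧}
    (h𝔭 : 𝔭.IsPrime) {c : OC K hna} (hc : ‖c‖ < 1) (hXc : X - C c ∈ 𝔭) :
    𝔭 = Ideal.span {X - C c} ∨ ∀ g, g ∈ 𝔭 ↔ ‖coeff 0 g‖ < 1 := by
  have := isAdicComplete_span_singleton hc
  have hI : Ideal.span {c} ≠ ⊤ := by
    rwa [Ne, Ideal.span_singleton_eq_top, not_isUnit_iff_norm_lt_one]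
  choose q a hqa using exists_eq_X_sub_C_mul_add_C hI (Ideal.mem_span_singleton_self c)
  have hmem_iff (g : (OC K hna)⟦X⟧) : g ∈ 𝔭 ↔ a g ∈ 𝔭.comap C := by
    rw [Ideal.mem_comap]
    conv_lhs => rw [hqa g]
    exact Ideal.add_mem_iff_right 𝔭 (𝔭.mul_mem_right _ hXc)
  have hcoeff (g : (OC K hna)⟦X⟧) : ‖coeff 0 g‖ < 1 ↔ ‖a g‖ < 1 := by
    have hg : coeff 0 g = a g + -(c * coeff 0 (q g)) := by
      conv_lhs => rw [hqa g]
      simp only [coeff_zero_eq_constantCoeff_apply, map_add, map_mul, map_sub, constantCoeff_X,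
        constantCoeff_C]
      ring
    refine hg ▸ norm_add_lt_iff_of_norm_right_lt ?_
    rw [norm_neg, norm_mul]
    exact mul_lt_one_of_nonneg_of_lt_one_left (norm_nonneg _) hc (coeff 0 (q g)).2
  by_cases hle : 𝔭 ≤ Ideal.span {X - C c}
  · exact Or.inl (le_antisymm hle ((Ideal.span_singleton_le_iff_mem _).2 hXc))
  obtain ⟨h, hh, hnot⟩ := SetLike.not_le_iff_exists.1 hle
  have ha0 : a h ≠ 0 := fun h0 ↦ hnot <|
    Ideal.mem_span_singleton.2 ⟨q h, (hqa h).trans (by rw [h0, map_zero, add_zero])⟩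
  have h𝔮 := Ideal.comap_isPrime C 𝔭
  refine Or.inr fun g ↦ ?_
  rw [hcoeff, hmem_iff, ← not_isUnit_iff_norm_lt_one]
  exact ⟨fun hg hu ↦ h𝔮.ne_top (Ideal.eq_top_of_isUnit_mem _ hg hu),
    fun hg ↦ mem_of_norm_lt_one h𝔮 ((hmem_iff h).1 hh) ha0 (not_isUnit_iff_norm_lt_one.1 hg)⟩

end OC

theorem statement0_general (C : Type) [NontriviallyNormedField C]
    [IsAlgClosed C] [CompleteSpace C]
    (hna : IsNonarchimedean (norm : C → ℝ))
    (𝔭 : Ideal (PowerSeries (OC C hna))) (h𝔭 : 𝔭.IsPrime) :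
    -- (i) 𝔭 is contained in 𝔭_crys
    (∀ f ∈ 𝔭, ∀ n : ℕ, ‖(PowerSeries.coeff (R := OC C hna) n f : C)‖ < 1) ∨
    -- (ii) 𝔭 equals the maximal ideal 𝔪
    (∀ f : PowerSeries (OC C hna), f ∈ 𝔭 ↔ ‖(PowerSeries.coeff (R := OC C hna) 0 f : C)‖ < 1) ∨
    -- (iii) 𝔭 is generated by X - c for some c ∈ m_C
    (∃ c : OC C hna, ‖(c : C)‖ < 1 ∧
      𝔭 = Ideal.span {PowerSeries.X - PowerSeries.C (R := OC C hna) c}) := by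
  have := IsUltrametricDist.isUltrametricDist_of_isNonarchimedean_norm hna
  by_cases hcrys : ∀ f ∈ 𝔭, ∀ n : ℕ, ‖coeff n f‖ < 1
  · exact Or.inl hcrys
  push Not at hcrys
  obtain ⟨f, hf, n, hn⟩ := hcrys
  obtain ⟨c, hc, hXc⟩ :=
    OC.exists_X_sub_C_mem_of_norm_coeff_eq_one h𝔭 hf (le_antisymm (coeff n f).2 hn)
  rcases OC.eq_span_X_sub_C_or_forall_mem_iff h𝔭 hc hXc with hspan | hmax
  · exact Or.inr (Or.inr ⟨c, hc, hspan⟩)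
  · exact Or.inr (Or.inl hmax)

theorem statement0 (p : ℕ) [Fact p.Prime] (C : Type) [NontriviallyNormedField C]
    [IsAlgClosed C] [CharP C p] [CompleteSpace C]
    (hna : IsNonarchimedean (norm : C → ℝ))
    (𝔭 : Ideal (PowerSeries (OC C hna))) (h𝔭 : 𝔭.IsPrime) :
    -- (i) 𝔭 is contained in 𝔭_crys
    (∀ f ∈ 𝔭, ∀ n : ℕ, ‖(PowerSeries.coeff (R := OC C hna) n f : C)‖ < 1) ∨
    -- (ii) 𝔭 equals the maximal ideal 𝔪
    (∀ f : PowerSeries (OC C hna), f ∈ 𝔭 ↔ ‖(PowerSeries.coeff (R := OC C hna) 0 f : C)‖ < 1) ∨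
    -- (iii) 𝔭 is generated by X - c for some c ∈ m_C
    (∃ c : OC C hna, ‖(c : C)‖ < 1 ∧
      𝔭 = Ideal.span {PowerSeries.X - PowerSeries.C (R := OC C hna) c}) :=
  statement0_general C hna 𝔭 h𝔭
end
end

section
/- For every c ∈ m_C, the principal ideal generated by X − c in O_C[[X]] is a prime ideal, and the localization of O_C[[X]] at this prime ideal is a discrete valuation ring. -/
noncomputable section

/-!
For `‖c‖ < 1` the series `∑ aₙ cⁿ` converges in `O_C`, so evaluation at `c` is a ring homomorphism
`O_C⟦X⟧ → O_C`; division with remainder by `X - c` (the quotient has `k`-th coefficient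
`∑ₙ a_{n+k+1} cⁿ`) shows that its kernel is `(X - c)`, which is therefore prime.
In degree `j`, a multiple of `(X - c)ⁿ` has coefficient of norm at most `‖c‖ ^ (n - j)`, so no
nonzero series is divisible by every power of `X - c`. Hence every nonzero element of the
localization at `(X - c)` is a unit times a power of `X - c`, i.e. the localization is a DVR.
-/

open PowerSeries

namespace OC

variable {K : Type} [NormedField K] {hna : IsNonarchimedean (norm : K → ℝ)}

local notation "𝒪" => OC K hna

theorem mem_iff {x : K} : x ∈ 𝒪 ↔ ‖x‖ ≤ 1 := Iff.rfl

theorem norm_le_one (x : 𝒪) : ‖(x : K)‖ ≤ 1 := x.2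

theorem norm_tsum_le_one (x : ℕ → 𝒪) : ‖∑' n, (x n : K)‖ ≤ 1 :=
  have := IsUltrametricDist.isUltrametricDist_of_isNonarchimedean_norm hna
  IsUltrametricDist.norm_tsum_le_of_forall_le_of_nonneg zero_le_one fun n => norm_le_one (x n)

theorem norm_coeff_le_of_X_sub_C_pow_dvd {c : 𝒪} {n : ℕ} {f : 𝒪⟦X⟧}
    (h : (X - C c) ^ n ∣ f) (j : ℕ) : ‖(↑(coeff j f) : K)‖ ≤ ‖(c : K)‖ ^ (n - j) := by
  have := IsUltrametricDist.isUltrametricDist_of_isNonarchimedean_norm hna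
  have hc : ‖(c : K)‖ ≤ 1 := norm_le_one c
  induction n generalizing f j with
  | zero => simpa using norm_le_one (coeff j f)
  | succ n ih =>
    obtain ⟨g, rfl⟩ := h
    have hdvd : (X - C c) ^ n ∣ (X - C c) ^ n * g := dvd_mul_right _ _
    rw [pow_succ', mul_assoc, sub_mul, map_sub, coeff_C_mul]
    push_cast
    rw [sub_eq_add_neg]
    refine (IsUltrametricDist.norm_add_le_max _ _).trans (max_le ?_ ?_)
    · cases j with
      | zero => simp
      | succ j =>
        rw [coeff_succ_X_mul]
        exact (ih hdvd j).trans_eq (by congr 1; omega)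
    · rw [norm_neg, norm_mul]
      refine (mul_le_mul_of_nonneg_left (ih hdvd j) (norm_nonneg _)).trans ?_
      rw [← pow_succ']
      exact pow_le_pow_of_le_one (norm_nonneg _) hc (by omega)

variable {c : OC K hna}

theorem eq_zero_of_forall_X_sub_C_pow_dvd (hc : ‖(c : K)‖ < 1) {f : 𝒪⟦X⟧}
    (h : ∀ n, (X - C c) ^ n ∣ f) : f = 0 := by
  ext j
  have hbound (m : ℕ) : ‖(↑(coeff j f) : K)‖ ≤ ‖(c : K)‖ ^ m := by
    simpa using norm_coeff_le_of_X_sub_C_pow_dvd (h (m + j)) j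
  have hzero : ‖(↑(coeff j f) : K)‖ ≤ 0 :=
    ge_of_tendsto' (tendsto_pow_atTop_nhds_zero_of_lt_one (norm_nonneg _) hc) hbound
  simpa using hzero

theorem finiteMultiplicity_X_sub_C (hc : ‖(c : K)‖ < 1) {f : 𝒪⟦X⟧}
    (hf : f ≠ 0) : FiniteMultiplicity (X - C c) f := by
  by_contra! h
  exact hf (eq_zero_of_forall_X_sub_C_pow_dvd hc fun n => (pow_dvd_pow _ n.le_succ).trans (h n))

theorem summable_norm_coeff_mul_pow (hc : ‖(c : K)‖ < 1) (f : 𝒪⟦X⟧) :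
    Summable fun n => ‖((coeff n f : 𝒪) : K) * (c : K) ^ n‖ := by
  refine .of_nonneg_of_le (fun _ => norm_nonneg _) (fun n => ?_)
    (summable_geometric_of_lt_one (norm_nonneg _) hc)
  rw [norm_mul, norm_pow]
  exact mul_le_of_le_one_left (by positivity) (norm_le_one _)

variable [CompleteSpace K]

def evalAt (hc : ‖(c : K)‖ < 1) : 𝒪⟦X⟧ →+* 𝒪 where
  toFun f := ⟨∑' n, ((coeff n f : 𝒪) : K) * (c : K) ^ n,
    mem_iff.2 <| by simpa using norm_tsum_le_one fun n => coeff n f * c ^ n⟩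
  map_one' := by
    ext
    change ∑' n, _ = _
    rw [tsum_eq_single 0 fun n hn => by simp [coeff_one, hn]]
    simp
  map_mul' f g := by
    ext
    change ∑' n, _ = (∑' n, _) * ∑' n, _
    rw [tsum_mul_tsum_eq_tsum_sum_antidiagonal_of_summable_norm
      (summable_norm_coeff_mul_pow hc f) (summable_norm_coeff_mul_pow hc g)]
    refine tsum_congr fun n => ?_
    rw [coeff_mul]
    push_cast
    rw [Finset.sum_mul]
    refine Finset.sum_congr rfl fun kl hkl => ?_
    rw [← Finset.HasAntidiagonal.mem_antidiagonal.mp hkl, pow_add]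
    ring
  map_zero' := by
    ext
    change ∑' n, _ = _
    simp
  map_add' f g := by
    ext
    change ∑' n, _ = ∑' n, _ + ∑' n, _
    simp only [map_add, Subring.coe_add, add_mul]
    exact (summable_norm_coeff_mul_pow hc f).of_norm.tsum_add
      (summable_norm_coeff_mul_pow hc g).of_norm

theorem coe_evalAt (hc : ‖(c : K)‖ < 1) (f : 𝒪⟦X⟧) :
    (evalAt hc f : K) = ∑' n, ((coeff n f : 𝒪) : K) * (c : K) ^ n := rfl

theorem evalAt_C (hc : ‖(c : K)‖ < 1) (a : 𝒪) : evalAt hc (C a) = a := by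
  ext
  rw [coe_evalAt, tsum_eq_single 0 fun n hn => by simp [coeff_C, hn]]
  simp

theorem evalAt_X (hc : ‖(c : K)‖ < 1) : evalAt hc X = c := by
  ext
  rw [coe_evalAt, tsum_eq_single 1 fun n hn => by simp [coeff_X, hn]]
  simp

theorem evalAt_eq_constantCoeff_add (hc : ‖(c : K)‖ < 1) (f : 𝒪⟦X⟧) :
    evalAt hc f = constantCoeff f + c * evalAt hc (mk fun n => coeff (n + 1) f) := by
  ext
  push_cast
  rw [coe_evalAt, coe_evalAt, (summable_norm_coeff_mul_pow hc f).of_norm.tsum_eq_zero_add,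
    ← tsum_mul_left]
  simp only [coeff_zero_eq_constantCoeff_apply, pow_zero, mul_one, coeff_mk, pow_succ]
  congr 1
  exact tsum_congr fun n => by ring

def divXSubC (hc : ‖(c : K)‖ < 1) (f : 𝒪⟦X⟧) : 𝒪⟦X⟧ :=
  mk fun k => evalAt hc (mk fun n => coeff (n + (k + 1)) f)

theorem X_sub_C_mul_divXSubC_add_C (hc : ‖(c : K)‖ < 1) (f : 𝒪⟦X⟧) :
    (X - C c) * divXSubC hc f + C (evalAt hc f) = f := by
  refine PowerSeries.ext fun k => ?_
  rcases k with _ | k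
  · have := evalAt_eq_constantCoeff_add hc f
    simp only [sub_mul, map_add, map_sub, coeff_zero_X_mul, coeff_C_mul, coeff_C, divXSubC,
      coeff_mk, if_true, zero_add, ← coeff_zero_eq_constantCoeff_apply] at this ⊢
    linear_combination this
  · have := evalAt_eq_constantCoeff_add hc (mk fun n => coeff (n + (k + 1)) f)
    have hshift : (mk fun n => coeff (n + 1 + (k + 1)) f) = mk fun n => coeff (n + (k + 1 + 1)) f :=
      congrArg mk <| funext fun n => by rw [add_right_comm, add_assoc]
    simp only [sub_mul, map_add, map_sub, coeff_succ_X_mul, coeff_C_mul, coeff_C, divXSubC,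
      coeff_mk, ← coeff_zero_eq_constantCoeff_apply, zero_add, hshift, if_neg k.succ_ne_zero,
      add_zero] at this ⊢
    linear_combination this

theorem ker_evalAt (hc : ‖(c : K)‖ < 1) : RingHom.ker (evalAt hc) = Ideal.span {X - C c} := by
  ext f
  rw [RingHom.mem_ker, Ideal.mem_span_singleton]
  constructor
  · intro hf
    exact ⟨divXSubC hc f, by simpa [hf] using (X_sub_C_mul_divXSubC_add_C hc f).symm⟩
  · rintro ⟨g, rfl⟩
    rw [map_mul, map_sub, evalAt_X, evalAt_C, sub_self, zero_mul]

theorem isPrime_span_X_sub_C (hc : ‖(c : K)‖ < 1) : (Ideal.span {X - C c}).IsPrime :=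
  ker_evalAt hc ▸ RingHom.ker_isPrime _

end OC

open IsLocalRing in
theorem Localization.AtPrime.isDiscreteValuationRing_of_finiteMultiplicity {R : Type*}
    [CommRing R] [IsDomain R] {π : R} [(Ideal.span {π}).IsPrime] (hπ : π ≠ 0)
    (hfin : ∀ r ≠ 0, FiniteMultiplicity π r) :
    IsDiscreteValuationRing (Localization.AtPrime (Ideal.span {π})) := by
  set P := Ideal.span {π}
  let ι := algebraMap R (Localization.AtPrime P)
  have hι : Function.Injective ι :=
    IsLocalization.injective _ P.primeCompl_le_nonZeroDivisors
  have hmax : maximalIdeal (Localization.AtPrime P) = Ideal.span {ι π} := by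
    rw [← Localization.AtPrime.map_eq_maximalIdeal, Ideal.map_span, Set.image_singleton]
  have hirr : Irreducible (ι π) :=
    IsDiscreteValuationRing.irreducible_of_span_eq_maximalIdeal _
      ((map_ne_zero_iff ι hι).2 hπ) hmax
  refine .ofHasUnitMulPowIrreducibleFactorization ⟨ι π, hirr, fun {x} hx => ?_⟩
  obtain ⟨⟨r, s⟩, rfl⟩ := IsLocalization.mk'_surjective P.primeCompl x
  dsimp only at hx ⊢
  have hr : r ≠ 0 := by
    rintro rfl
    exact hx (IsLocalization.mk'_zero s)
  obtain ⟨g, hrg, hg⟩ := (hfin r hr).exists_eq_pow_mul_and_not_dvd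
  have hgunit : IsUnit (ι g) :=
    IsLocalization.map_units _ (⟨g, mt Ideal.mem_span_singleton.1 hg⟩ : P.primeCompl)
  have hsunit : IsUnit (IsLocalization.mk' (Localization.AtPrime P) (1 : R) s) :=
    .of_mul_eq_one (ι s) (by rw [IsLocalization.mk'_spec, map_one])
  generalize multiplicity π r = n at hrg
  refine ⟨n, ?_⟩
  rw [IsLocalization.mk'_eq_mul_mk'_one, hrg, map_mul, map_pow, mul_assoc]
  exact associated_mul_unit_right _ _ (hgunit.mul hsunit)

theorem statement2_general (C : Type) [NontriviallyNormedField C]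
    [CompleteSpace C]
    (hna : IsNonarchimedean (norm : C → ℝ))
    (c : OC C hna) (hc : ‖(c : C)‖ < 1) :
    ∃ hP : (Ideal.span {PowerSeries.X - PowerSeries.C (R := OC C hna) c}).IsPrime,
      IsDiscreteValuationRing
        (Localization.AtPrime (Ideal.span {PowerSeries.X - PowerSeries.C (R := OC C hna) c})
          (hp := hP)) := by
  have hP := OC.isPrime_span_X_sub_C hc
  have hX_sub_C : PowerSeries.X - PowerSeries.C c ≠ 0 := fun h => by
    simpa using congrArg (PowerSeries.coeff 1) h
  exact ⟨hP, Localization.AtPrime.isDiscreteValuationRing_of_finiteMultiplicity hX_sub_C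
    fun _ => OC.finiteMultiplicity_X_sub_C hc⟩

theorem statement2 (p : ℕ) [Fact p.Prime] (C : Type) [NontriviallyNormedField C]
    [IsAlgClosed C] [CharP C p] [CompleteSpace C]
    (hna : IsNonarchimedean (norm : C → ℝ))
    (c : OC C hna) (hc : ‖(c : C)‖ < 1) :
    ∃ hP : (Ideal.span {PowerSeries.X - PowerSeries.C (R := OC C hna) c}).IsPrime,
      IsDiscreteValuationRing
        (Localization.AtPrime (Ideal.span {PowerSeries.X - PowerSeries.C (R := OC C hna) c})
          (hp := hP)) :=
  statement2_general C hna c hc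
end
end

section
/- Let A be a commutative ring and let a, b ∈ A be such that a is a nonzerodivisor in A and the image of b is a nonzerodivisor in A/(a) (i.e., (a, b) is a regular sequence on A). Let M be an A-module admitting a short exact sequence 0 → F₁ → F₂ → M → 0 of A-modules with F₁ and F₂ finite free, and suppose that a·M = 0. Then b acts as a nonzerodivisor on M: every m ∈ M with b·m = 0 is zero. -/
/-!
Lift `m` with `b • m = 0` to `x ∈ F₂`. Both `a • x` and `b • x` lie in the image of `f`, say
`a • x = f z` and `b • x = f y`, and injectivity of `f` gives `a • y = b • z`. Since `b` is regular
on `F₁ / a F₁` (flatness carries the regular sequence `a, b` from `A` to the free module `F₁`),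
`z = a • w`; as `a` is regular on `F₂`, `x = f w`, whence `m = 0`.
-/

open Pointwise RingTheory.Sequence
open scoped nonZeroDivisors

variable {R : Type*} [CommRing R]

theorem isSMulRegular_self_iff_mem_nonZeroDivisors {a : R} : IsSMulRegular R a ↔ a ∈ R⁰ :=
  isLeftRegular_iff.symm.trans (isLeftRegular_iff_isRegular.trans isRegular_iff_mem_nonZeroDivisors)

theorem isSMulRegular_quotient_iff_mem_nonZeroDivisors (I : Ideal R) (b : R) :
    IsSMulRegular (R ⧸ I) b ↔ Ideal.Quotient.mk I b ∈ (R ⧸ I)⁰ := by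
  rw [← isSMulRegular_self_iff_mem_nonZeroDivisors, ← isSMulRegular_map (Ideal.Quotient.mk I)]
  exact fun m => (Algebra.smul_def b m).symm

theorem isWeaklyRegular_pair_iff (a b : R) :
    IsWeaklyRegular R [a, b] ↔
      a ∈ R⁰ ∧ Ideal.Quotient.mk (Ideal.span {a}) b ∈ (R ⧸ Ideal.span {a})⁰ := by
  have e : QuotSMulTop a R ≃ₗ[R] R ⧸ Ideal.span {a} := Submodule.quotEquivOfEq _ _ <| by
    rw [← Submodule.ideal_span_singleton_smul, smul_eq_mul, Ideal.mul_top]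
  rw [isWeaklyRegular_cons_iff, isWeaklyRegular_singleton_iff, e.isSMulRegular_congr,
    isSMulRegular_self_iff_mem_nonZeroDivisors, isSMulRegular_quotient_iff_mem_nonZeroDivisors]

theorem RingTheory.Sequence.IsWeaklyRegular.of_flat_module {F : Type*} [AddCommGroup F]
    [Module R F] [Module.Flat R F] {rs : List R} (h : IsWeaklyRegular R rs) :
    IsWeaklyRegular F rs :=
  (TensorProduct.lid R F).isWeaklyRegular_congr rs |>.mp h.isWeaklyRegular_rTensor

theorem exists_eq_smul_of_smul_eq_smul {N : Type*} [AddCommGroup N] [Module R N] {a b : R}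
    (hb : IsSMulRegular (QuotSMulTop a N) b) {y z : N} (h : a • y = b • z) :
    ∃ w, z = a • w := by
  have hz : b • Submodule.Quotient.mk (p := a • (⊤ : Submodule R N)) z = 0 := by
    rw [← Submodule.Quotient.mk_smul, ← h, Submodule.Quotient.mk_eq_zero]
    exact Submodule.smul_mem_pointwise_smul y a ⊤ trivial
  obtain ⟨w, -, hw⟩ := (Submodule.mem_smul_pointwise_iff_exists _ _ _).mp
    ((Submodule.Quotient.mk_eq_zero _).mp (hb.right_eq_zero_of_smul hz))
  exact ⟨w, hw.symm⟩

theorem IsSMulRegular.of_exact_of_smul_eq_zero {F₁ F₂ M : Type*} [AddCommGroup F₁]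
    [Module R F₁] [AddCommGroup F₂] [Module R F₂] [AddCommGroup M] [Module R M] {a b : R}
    {f : F₁ →ₗ[R] F₂} {g : F₂ →ₗ[R] M} (hf : Function.Injective f) (hg : Function.Surjective g)
    (hfg : Function.Exact f g) (ha : IsSMulRegular F₂ a) (hb : IsSMulRegular (QuotSMulTop a F₁) b)
    (haM : ∀ m : M, a • m = 0) : IsSMulRegular M b := by
  refine IsSMulRegular.of_right_eq_zero_of_smul fun m hm => ?_
  obtain ⟨x, rfl⟩ := hg m
  obtain ⟨z, hz⟩ := (hfg (a • x)).mp (by rw [map_smul, haM])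
  obtain ⟨y, hy⟩ := (hfg (b • x)).mp (by rw [map_smul, hm])
  obtain ⟨w, rfl⟩ := exists_eq_smul_of_smul_eq_smul hb (y := y) (z := z) <| hf <| by
    rw [map_smul, map_smul, hz, hy, smul_comm]
  have hx : x = f w := ha (show a • x = a • f w by rw [← map_smul, hz])
  rw [hx]
  exact hfg.apply_apply_eq_zero w

theorem statement6 (A : Type) [CommRing A] (a b : A)
    (ha : a ∈ nonZeroDivisors A)
    (hb : Ideal.Quotient.mk (Ideal.span {a}) b ∈ nonZeroDivisors (A ⧸ Ideal.span {a}))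
    (M : Type) [AddCommGroup M] [Module A M]
    (n₁ n₂ : ℕ)
    (f : (Fin n₁ → A) →ₗ[A] (Fin n₂ → A)) (g : (Fin n₂ → A) →ₗ[A] M)
    (hf : Function.Injective f) (hg : Function.Surjective g)
    (hfg : LinearMap.ker g = LinearMap.range f)
    (haM : ∀ m : M, a • m = 0) :
    ∀ m : M, b • m = 0 → m = 0 := by
  have hF₁ : IsWeaklyRegular (Fin n₁ → A) [a, b] :=
    ((isWeaklyRegular_pair_iff a b).mpr ⟨ha, hb⟩).of_flat_module
  rw [isWeaklyRegular_cons_iff, isWeaklyRegular_singleton_iff] at hF₁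
  have hbM : IsSMulRegular M b :=
    .of_exact_of_smul_eq_zero hf hg (LinearMap.exact_iff.mpr hfg)
      (Module.Flat.isSMulRegular_of_nonZeroDivisors ha) hF₁.2 haM
  exact fun m => hbM.right_eq_zero_of_smul
end

section
/- Let M be an O_C[[X]]-module admitting a short exact sequence 0 → F₁ → F₂ → M → 0 of O_C[[X]]-modules with F₁ and F₂ finite free, and suppose that X·M = 0. Then M, regarded as an O_C-module by restriction of scalars along the constant-coefficient inclusion O_C → O_C[[X]], is a free O_C-module. -/
/-!
Because `X` kills `M`, every power series acts on `M` through its constant coefficient, so `M` is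
a finite `O_C`-module. It is torsion-free: if `c ≠ 0` kills the image of `y ∈ F₂`, write
`c • y = f z` and `X • y = f z₀`; injectivity of `f` gives `c • z₀ = X • z`, so `X ∣ z₀`, and
cancelling `X` puts `y` in the image of `f`. Over the valuation ring `O_C` a torsion-free module
is flat, and a finite flat module over a local ring is free.
-/

noncomputable section

open PowerSeries

theorem OC_eq_valuation_integer (C : Type) [NormedField C]
    (hna : IsNonarchimedean (norm : C → ℝ)) :
    letI := IsUltrametricDist.isUltrametricDist_of_isNonarchimedean_norm hna
    OC C hna = (NormedField.valuation (K := C)).integer := by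
  ext x
  rfl

instance OC.valuationRing (C : Type) [NormedField C]
    (hna : IsNonarchimedean (norm : C → ℝ)) : ValuationRing (OC C hna) :=
  letI := IsUltrametricDist.isUltrametricDist_of_isNonarchimedean_norm hna
  let e := RingEquiv.subringCongr (OC_eq_valuation_integer C hna)
  e.symm.surjective.valuationRing e.symm.toRingHom

namespace PowerSeries

variable {A : Type*} [CommRing A] {M : Type*} [AddCommGroup M] [Module A⟦X⟧ M]

theorem smul_eq_C_constantCoeff_smul (hXM : ∀ m : M, (X : A⟦X⟧) • m = 0) (r : A⟦X⟧) (m : M) :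
    r • m = C (constantCoeff r) • m := by
  conv_lhs => rw [eq_X_mul_shift_add_const r]
  rw [add_smul, mul_smul, hXM, zero_add]

theorem finite_of_X_smul_eq_zero [Module A M] [IsScalarTower A A⟦X⟧ M] [Module.Finite A⟦X⟧ M]
    (hXM : ∀ m : M, (X : A⟦X⟧) • m = 0) : Module.Finite A M := by
  obtain ⟨s, hs⟩ := Module.Finite.fg_top (R := A⟦X⟧) (M := M)
  refine ⟨⟨s, Submodule.eq_top_iff'.mpr fun m => ?_⟩⟩
  have hm : m ∈ Submodule.span A⟦X⟧ (s : Set M) := hs ▸ Submodule.mem_top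
  induction hm using Submodule.span_induction with
  | mem x hx => exact Submodule.subset_span hx
  | zero => exact zero_mem _
  | add x y _ _ hx hy => exact add_mem hx hy
  | smul r x _ hx =>
    rw [smul_eq_C_constantCoeff_smul hXM, ← algebraMap_eq, algebraMap_smul]
    exact Submodule.smul_mem _ _ hx

theorem X_dvd_of_C_mul_eq_X_mul [IsDomain A] {c : A} (hc : c ≠ 0) {a b : A⟦X⟧}
    (h : C c * a = X * b) : X ∣ a := by
  have h0 := congrArg constantCoeff h
  rw [map_mul, map_mul, constantCoeff_C, constantCoeff_X, zero_mul] at h0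
  exact X_dvd_iff.mpr ((mul_eq_zero.mp h0).resolve_left hc)

theorem isTorsionFree_of_X_smul_eq_zero [IsDomain A] [Module A M] [IsScalarTower A A⟦X⟧ M]
    {ι₁ ι₂ : Type*} (f : (ι₁ → A⟦X⟧) →ₗ[A⟦X⟧] (ι₂ → A⟦X⟧)) (g : (ι₂ → A⟦X⟧) →ₗ[A⟦X⟧] M)
    (hf : Function.Injective f) (hg : Function.Surjective g)
    (hfg : LinearMap.ker g = LinearMap.range f) (hXM : ∀ m : M, (X : A⟦X⟧) • m = 0) :
    Module.IsTorsionFree A M := by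
  refine .of_smul_eq_zero fun c m hcm => or_iff_not_imp_left.mpr fun hc => ?_
  obtain ⟨y, rfl⟩ := hg m
  have hgf : ∀ z, g z = 0 → ∃ w, f w = z := fun z hz => (hfg ▸ hz : z ∈ LinearMap.range f)
  obtain ⟨z, hz⟩ := hgf (C c • y) (by rw [map_smul, ← algebraMap_eq, algebraMap_smul, hcm])
  obtain ⟨z₀, hz₀⟩ := hgf (X • y) (by rw [map_smul, hXM])
  have hCz₀ : C c • z₀ = X • z := hf (by rw [map_smul, map_smul, hz, hz₀, smul_comm])
  obtain ⟨w, hw⟩ : ∃ w, z₀ = (X : A⟦X⟧) • w := by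
    choose w hw using fun i => X_dvd_of_C_mul_eq_X_mul hc (congrFun hCz₀ i)
    exact ⟨w, funext fun i => by simp only [hw, Pi.smul_apply, smul_eq_mul]⟩
  have hy : y = f w := smul_right_injective _ (X_ne_zero (R := A)) <| by
    show X • y = X • f w
    rw [← map_smul, ← hw, hz₀]
  rw [hy]
  exact hfg.ge (LinearMap.mem_range_self f w)

theorem free_restrictScalars_of_X_smul_eq_zero [IsDomain A] [ValuationRing A]
    {ι₁ ι₂ : Type*} [Finite ι₂]
    (f : (ι₁ → A⟦X⟧) →ₗ[A⟦X⟧] (ι₂ → A⟦X⟧)) (g : (ι₂ → A⟦X⟧) →ₗ[A⟦X⟧] M)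
    (hf : Function.Injective f) (hg : Function.Surjective g)
    (hfg : LinearMap.ker g = LinearMap.range f) (hXM : ∀ m : M, (X : A⟦X⟧) • m = 0) :
    Module.Free A (RestrictScalars A A⟦X⟧ M) := by
  -- the `A`-module structure of `RestrictScalars A A⟦X⟧ M`, put on `M` itself
  let : Module A M := Module.restrictScalars A A⟦X⟧ M
  have : IsScalarTower A A⟦X⟧ M := .of_algebraMap_smul fun _ _ => rfl
  have := Module.Finite.of_surjective g hg
  have := finite_of_X_smul_eq_zero (A := A) hXM
  have := isTorsionFree_of_X_smul_eq_zero f g hf hg hfg hXM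
  have : Module.Flat A M := Module.Flat.flat_iff_torsion_eq_bot_of_isBezout.mpr
    (Submodule.isTorsionFree_iff_torsion_eq_bot.mp inferInstance)
  exact Module.free_of_flat_of_isLocalRing (R := A) (P := M)

end PowerSeries

theorem statement7_general (C : Type) [NontriviallyNormedField C]
    (hna : IsNonarchimedean (norm : C → ℝ))
    (M : Type) [AddCommGroup M] [Module (PowerSeries (OC C hna)) M]
    (n₁ n₂ : ℕ)
    (f : (Fin n₁ → PowerSeries (OC C hna)) →ₗ[PowerSeries (OC C hna)]
      (Fin n₂ → PowerSeries (OC C hna)))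
    (g : (Fin n₂ → PowerSeries (OC C hna)) →ₗ[PowerSeries (OC C hna)] M)
    (hf : Function.Injective f) (hg : Function.Surjective g)
    (hfg : LinearMap.ker g = LinearMap.range f)
    (hXM : ∀ m : M, (PowerSeries.X : PowerSeries (OC C hna)) • m = 0) :
    -- `M` is free as an `O_C`-module, via restriction of scalars along the
    -- constant-coefficient inclusion `O_C → O_C[[X]]`
    Module.Free (OC C hna) (RestrictScalars (OC C hna) (PowerSeries (OC C hna)) M) :=
  PowerSeries.free_restrictScalars_of_X_smul_eq_zero f g hf hg hfg hXM

theorem statement7 (p : ℕ) [Fact p.Prime] (C : Type) [NontriviallyNormedField C]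
    [CharP C p] [PerfectRing C p] [CompleteSpace C]
    (hna : IsNonarchimedean (norm : C → ℝ))
    (M : Type) [AddCommGroup M] [Module (PowerSeries (OC C hna)) M]
    (n₁ n₂ : ℕ)
    (f : (Fin n₁ → PowerSeries (OC C hna)) →ₗ[PowerSeries (OC C hna)]
      (Fin n₂ → PowerSeries (OC C hna)))
    (g : (Fin n₂ → PowerSeries (OC C hna)) →ₗ[PowerSeries (OC C hna)] M)
    (hf : Function.Injective f) (hg : Function.Surjective g)
    (hfg : LinearMap.ker g = LinearMap.range f)
    (hXM : ∀ m : M, (PowerSeries.X : PowerSeries (OC C hna)) • m = 0) :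
    -- `M` is free as an `O_C`-module, via restriction of scalars along the
    -- constant-coefficient inclusion `O_C → O_C[[X]]`
    Module.Free (OC C hna) (RestrictScalars (OC C hna) (PowerSeries (OC C hna)) M) :=
  statement7_general C hna M n₁ n₂ f g hf hg hfg hXM
end
end

section
/- Let A be a commutative ring and let U ⊆ Spec A be a quasi-compact open subset such that the restriction map A = Γ(Spec A, O_{Spec A}) → Γ(U, O_{Spec A}) is bijective. Then for every flat A-module M, the restriction map M = Γ(Spec A, M̃) → Γ(U, M̃) is bijective, where M̃ denotes the quasi-coherent sheaf of modules on Spec A associated with M (the tilde construction). -/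
/-!
Call `M` *separated over `U`* if an element killed by elements `u i` with `⋃ D(u i) ⊇ U` is zero,
and *gluing over `U`* if fractions `f i / g i` on basic opens `D(g i) ⊆ U` covering `U` which
agree on overlaps come from one element of `M`. For quasi-compact `U` these are exactly
injectivity and surjectivity of `M → Γ(U, M̃)`. Unlike the latter, both are visibly stable under
finite products and, being statements about finitely many linear relations, pass from finite
free modules to flat ones by the equational criterion for flatness.
-/

open AlgebraicGeometry TopologicalSpace
open PrimeSpectrum (basicOpen)

theorem Module.Flat.exists_factorization_of_forall_apply_eq_zero_of_free {A M N κ : Type}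
    [CommRing A] [AddCommGroup M] [Module A M] [Module.Flat A M] [AddCommGroup N] [Module A N]
    [Module.Free A N] [Module.Finite A N] [Fintype κ] {x : N →ₗ[A] M} {f : κ → N}
    (hf : ∀ k, x (f k) = 0) :
    ∃ (n : ℕ) (a : N →ₗ[A] (Fin n → A)) (y : (Fin n → A) →ₗ[A] M),
      x = y ∘ₗ a ∧ ∀ k, a (f k) = 0 := by
  classical
  obtain ⟨n, a, y, hxy, haf⟩ := exists_factorization_of_comp_eq_zero_of_free
    (f := Fintype.linearCombination A f) (x := x) (by ext k; simp [hf])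
  let e := Finsupp.linearEquivFunOnFinite A A (Fin n)
  refine ⟨n, e ∘ₗ a, y ∘ₗ e.symm, by ext; simp [hxy], fun k => ?_⟩
  simpa using congr(e ($haf (Pi.single k 1)))

theorem exists_pow_smul_eq_zero_pi {A τ : Type} [CommRing A] [Finite τ] {M : τ → Type}
    [∀ t, AddCommGroup (M t)] [∀ t, Module A (M t)] {h : A} {z : ∀ t, M t}
    (hz : ∀ t, ∃ N : ℕ, h ^ N • z t = 0) : ∃ N : ℕ, h ^ N • z = 0 := by
  cases nonempty_fintype τ
  choose N hN using hz
  refine ⟨Finset.univ.sup N, funext fun t => ?_⟩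
  obtain ⟨k, hk⟩ := Nat.exists_eq_add_of_le' (Finset.le_sup (f := N) (Finset.mem_univ t))
  simp [hk, pow_add, mul_smul, hN]

namespace PrimeSpectrum

variable {A : Type} [CommRing A]

theorem exists_pow_smul_eq_zero_of_forall_mem_basicOpen {M : Type} [AddCommGroup M]
    [Module A M] {h : A} {z : M} (H : ∀ p ∈ basicOpen h, ∃ u ∉ p.asIdeal, u • z = 0) :
    ∃ N : ℕ, h ^ N • z = 0 := by
  have : h ∈ Ideal.radical (LinearMap.ker (LinearMap.toSpanSingleton A M z)) := by
    rw [← vanishingIdeal_zeroLocus_eq_radical, mem_vanishingIdeal]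
    intro p hp
    by_contra hhp
    obtain ⟨u, hu, huz⟩ := H p hhp
    exact hu (hp (by simpa using huz))
  obtain ⟨N, hN⟩ := this
  exact ⟨N, by simpa using hN⟩

theorem exists_finset_le_iSup_basicOpen {U : Opens (PrimeSpectrum.Top A)}
    (hU : IsCompact (U : Set (PrimeSpectrum.Top A))) (g : U → A)
    (hg : ∀ p, p.1 ∈ basicOpen (g p)) : ∃ t : Finset U, U ≤ ⨆ p : t, basicOpen (g p) := by
  obtain ⟨t, ht⟩ := hU.elim_finite_subcover (fun p => (basicOpen (g p) : Set (PrimeSpectrum A)))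
    (fun p => (basicOpen (g p)).2) (fun q hq => Set.mem_iUnion.2 ⟨⟨q, hq⟩, hg _⟩)
  refine ⟨t, fun q hq => ?_⟩
  obtain ⟨p, hp, hqp⟩ := Set.mem_iUnion₂.1 (ht hq)
  exact Opens.mem_iSup.2 ⟨⟨p, hp⟩, hqp⟩

end PrimeSpectrum

namespace AlgebraicGeometry.StructureSheaf

variable {A : Type} [CommRing A]

def IsSeparatedOver (U : Opens (PrimeSpectrum.Top A)) (M : Type) [AddCommGroup M] [Module A M] :
    Prop :=
  ∀ (ι : Type) [Fintype ι] (u : ι → A) (m : M),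
    U ≤ ⨆ i, basicOpen (u i) → (∀ i, u i • m = 0) → m = 0

def IsGluingOver (U : Opens (PrimeSpectrum.Top A)) (M : Type) [AddCommGroup M] [Module A M] :
    Prop :=
  ∀ (ι : Type) [Fintype ι] (g : ι → A) (f : ι → M),
    (∀ i, basicOpen (g i) ≤ U) → U ≤ ⨆ i, basicOpen (g i) →
    (∀ i j, ∃ N : ℕ, (g i * g j) ^ N • (g j • f i - g i • f j) = 0) →
    ∃ m : M, ∀ i, ∃ N : ℕ, g i ^ N • (g i • m - f i) = 0

variable {M : Type} [AddCommGroup M] [Module A M] {U : Opens (PrimeSpectrum.Top A)}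

theorem const_eq_const_of_pow_smul_eq_zero {m₁ m₂ : M} {g₁ g₂ h : A}
    {V : Opens (PrimeSpectrum.Top A)} (hV : V ≤ basicOpen h) (hu₁ : V ≤ basicOpen g₁)
    (hu₂ : V ≤ basicOpen g₂) {N : ℕ} (hN : h ^ N • (g₂ • m₁ - g₁ • m₂) = 0) :
    const m₁ g₁ V hu₁ = const m₂ g₂ V hu₂ :=
  Subtype.ext <| funext fun p => LocalizedModule.mk_eq.mpr
    ⟨⟨h ^ N, Submonoid.pow_mem _ (hV p.2) N⟩,
      by simpa [Submonoid.smul_def, smul_sub, sub_eq_zero] using hN⟩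

theorem exists_pow_smul_eq_zero_of_const_eq_const {m₁ m₂ : M} {g₁ g₂ h : A} {hu₁ hu₂}
    (H : const m₁ g₁ (basicOpen h) hu₁ = const m₂ g₂ (basicOpen h) hu₂) :
    ∃ N : ℕ, h ^ N • (g₂ • m₁ - g₁ • m₂) = 0 := by
  refine PrimeSpectrum.exists_pow_smul_eq_zero_of_forall_mem_basicOpen fun p hp => ?_
  obtain ⟨u, hu⟩ := LocalizedModule.mk_eq.mp (congrFun (congrArg Subtype.val H) ⟨p, hp⟩)
  exact ⟨u, u.2, by simpa [Submonoid.smul_def, smul_sub, sub_eq_zero] using hu⟩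

theorem isSeparatedOver_of_injective (hM : Function.Injective (toOpenₗ A M U)) :
    IsSeparatedOver U M := by
  intro ι _ u m hcover hum
  rw [← map_eq_zero_iff _ hM]
  refine Subtype.ext <| funext fun p => ?_
  obtain ⟨i, hi⟩ := Opens.mem_iSup.1 (hcover p.2)
  refine (LocalizedModule.mk_eq.mpr ⟨⟨u i, hi⟩, ?_⟩).trans (LocalizedModule.zero_mk 1)
  simpa [Submonoid.smul_def] using hum i

theorem injective_of_isSeparatedOver (hU : IsCompact (U : Set (PrimeSpectrum.Top A)))
    (hM : IsSeparatedOver U M) : Function.Injective (toOpenₗ A M U) := by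
  rw [← LinearMap.ker_eq_bot, LinearMap.ker_eq_bot']
  intro m hm
  have (p : U) : ∃ u ∉ p.1.asIdeal, u • m = 0 := by
    have := (congrFun (congrArg Subtype.val hm) p).trans (LocalizedModule.zero_mk 1).symm
    obtain ⟨u, hu⟩ := LocalizedModule.mk_eq.mp this
    exact ⟨u, u.2, by simpa [Submonoid.smul_def] using hu⟩
  choose u hu hum using this
  obtain ⟨t, ht⟩ := PrimeSpectrum.exists_finset_le_iSup_basicOpen hU u hu
  exact hM _ (fun i : t => u i) m ht fun i => hum i

theorem isGluingOver_of_surjective (hM : Function.Surjective (toOpenₗ A M U)) :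
    IsGluingOver U M := by
  intro ι _ g f hgU hcover hcompat
  have hglue : TopCat.Presheaf.IsCompatible (structureSheafInType A M).obj
      (fun i => basicOpen (g i)) (fun i => const (f i) (g i) _ le_rfl) := fun i j => by
    obtain ⟨N, hN⟩ := hcompat i j
    exact const_eq_const_of_pow_smul_eq_zero (h := g i * g j)
      (PrimeSpectrum.basicOpen_mul _ _).ge inf_le_left inf_le_right hN
  obtain ⟨s, hs, -⟩ := (structureSheafInType A M).existsUnique_gluing'
    (fun i => basicOpen (g i)) U (fun i => (hgU i).hom) hcover _ hglue
  obtain ⟨m, rfl⟩ := hM s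
  refine ⟨m, fun i => ?_⟩
  obtain ⟨N, hN⟩ :=
    exists_pow_smul_eq_zero_of_const_eq_const ((toOpenₗ_eq_const _ m).symm.trans (hs i))
  exact ⟨N, by simpa using hN⟩

theorem surjective_of_isGluingOver (hU : IsCompact (U : Set (PrimeSpectrum.Top A)))
    (hM : IsGluingOver U M) : Function.Surjective (toOpenₗ A M U) := by
  intro s
  choose g hg hgU f hf using fun p : U => exists_const U s p.1 p.2
  obtain ⟨t, ht⟩ := PrimeSpectrum.exists_finset_le_iSup_basicOpen hU g hg
  have hcompat (i j : t) : ∃ N : ℕ, (g i * g j) ^ N • (g j • f i - g i • f j) = 0 := by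
    have hi := PrimeSpectrum.basicOpen_mul_le_left (g i) (g j)
    have hj := PrimeSpectrum.basicOpen_mul_le_right (g i) (g j)
    refine exists_pow_smul_eq_zero_of_const_eq_const (hu₁ := hi) (hu₂ := hj) ?_
    exact Subtype.ext <| funext fun q =>
      (congrFun (congrArg Subtype.val (hf i)) ⟨q.1, hi q.2⟩).trans
        (congrFun (congrArg Subtype.val (hf j)) ⟨q.1, hj q.2⟩).symm
  obtain ⟨m, hm⟩ := hM _ (fun i : t => g i) (fun i => f i) (fun i => hgU i) ht hcompat
  refine ⟨m, (structureSheafInType A M).eq_of_locally_eq' (fun i : t => basicOpen (g i)) U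
    (fun i => (hgU i).hom) ht _ _ fun i => ?_⟩
  obtain ⟨N, hN⟩ := hm i
  exact ((toOpenₗ_eq_const _ m).trans
    (const_eq_const_of_pow_smul_eq_zero le_rfl _ _ (N := N) (by simpa using hN))).trans (hf i)

theorem IsSeparatedOver.pi {τ : Type} {M : τ → Type} [∀ t, AddCommGroup (M t)]
    [∀ t, Module A (M t)] (hM : ∀ t, IsSeparatedOver U (M t)) :
    IsSeparatedOver U (∀ t, M t) :=
  fun ι _ u m hcover hum => funext fun t => hM t ι u (m t) hcover fun i => congrFun (hum i) t

theorem IsGluingOver.pi {τ : Type} [Finite τ] {M : τ → Type} [∀ t, AddCommGroup (M t)]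
    [∀ t, Module A (M t)] (hM : ∀ t, IsGluingOver U (M t)) : IsGluingOver U (∀ t, M t) := by
  intro ι _ g f hgU hcover hcompat
  choose m hm using fun t => hM t _ g (fun i => f i t) hgU hcover
    fun i j => (hcompat i j).imp fun N hN => congrFun hN t
  exact ⟨m, fun i => exists_pow_smul_eq_zero_pi fun t => hm t i⟩

theorem IsSeparatedOver.of_flat (hA : IsSeparatedOver U A) [Module.Flat A M] :
    IsSeparatedOver U M := by
  intro ι _ u m hcover hum
  obtain ⟨n, a, y, hxy, ha⟩ := Module.Flat.exists_factorization_of_forall_apply_eq_zero_of_free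
    (x := LinearMap.toSpanSingleton A M m) (f := u) (by simpa using hum)
  have : a 1 = 0 := IsSeparatedOver.pi (fun _ => hA) _ u (a 1) hcover fun i => by
    rw [← map_smul, smul_eq_mul, mul_one, ha]
  simpa [this] using LinearMap.congr_fun hxy 1

theorem IsGluingOver.of_flat (hA : IsGluingOver U A) [Module.Flat A M] : IsGluingOver U M := by
  classical
  intro ι _ g f hgU hcover hcompat
  choose N hN using hcompat
  let rel : ι × ι → ι → A := fun p =>
    (g p.1 * g p.2) ^ N p.1 p.2 • (g p.2 • Pi.single p.1 1 - g p.1 • Pi.single p.2 1)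
  obtain ⟨n, a, y, hxy, ha⟩ := Module.Flat.exists_factorization_of_forall_apply_eq_zero_of_free
    (x := Fintype.linearCombination A f) (f := rel) fun p => by simpa [rel] using hN p.1 p.2
  obtain ⟨v, hv⟩ := IsGluingOver.pi (fun _ => hA) _ g (fun i => a (Pi.single i 1)) hgU hcover
    fun i j => ⟨N i j, by simpa [rel] using ha (i, j)⟩
  refine ⟨y v, fun i => (hv i).imp fun K hK => ?_⟩
  have hf : f i = y (a (Pi.single i 1)) := by simpa using LinearMap.congr_fun hxy (Pi.single i 1)
  rw [hf, ← map_smul, ← map_sub, ← map_smul, hK, map_zero]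

end AlgebraicGeometry.StructureSheaf

theorem statement9 (A : Type) [CommRing A]
    (U : Opens (PrimeSpectrum.Top A)) (hU : IsCompact (U : Set (PrimeSpectrum.Top A)))
    (hA : Function.Bijective (StructureSheaf.toOpen A U))
    (M : Type) [AddCommGroup M] [Module A M] [Module.Flat A M] :
    Function.Bijective (ModuleCat.Tilde.toOpen (R := CommRingCat.of A) (ModuleCat.of A M) U) := by
  replace hA : Function.Bijective (StructureSheaf.toOpenₗ A A U) := hA
  show Function.Bijective (StructureSheaf.toOpenₗ A M U)
  exact ⟨StructureSheaf.injective_of_isSeparatedOver hU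
      (StructureSheaf.isSeparatedOver_of_injective hA.1).of_flat,
    StructureSheaf.surjective_of_isGluingOver hU
      (StructureSheaf.isGluingOver_of_surjective hA.2).of_flat⟩
end

section
/- Let n ≥ 1 and let M = Sⁿ be the free S-module with standard basis e₁, …, e_n. For a hermitian quadratic form (q, f) on M with values in R, define n×n matrices A(q), B(q) over R by A(q)_{ii} = q(e_i), A(q)_{ij} = f(e_i, e_j) for i ≠ j, and B(q)_{ij} = f(e_i, Π·e_j). Then the assignment q ↦ (A(q), B(q)) is a bijection from the set of hermitian quadratic forms on M with values in R onto the set of pairs (A, B) of n×n matrices over R such that A is symmetric, B + Bᵀ = t·Ã, and B_{ii} = t·A_{ii} for all i, where Ã is the matrix with Ã_{ij} = A_{ij} for i ≠ j and Ã_{ii} = 2·A_{ii}. -/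
/-!
Since `1, Π` is an `R`-basis of `S` and `f (x • m) (y • n) = f m ((σ x * y) • n)`, the values
`f(eᵢ, eⱼ)` and `f(eᵢ, Π eⱼ)` determine `f`, and then `q` is determined by its values `q(eᵢ)`,
because `q(m + n) = q(m) + q(n) + f(m, n)` and `q(x eᵢ) = N(x) q(eᵢ)`. The identity
`f(m, x m) = (N(1 + x) - N(1) - N(x)) q(m) = (x + σ x) q(m)` gives `f(eᵢ, eᵢ) = 2 q(eᵢ)` and
`Bᵢᵢ = t Aᵢᵢ`, and `σ Π = t - Π` gives `B + Bᵀ = t Ã`.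

Conversely, for every `R`-linear `ℓ : S → R` and every matrix `H` over `S`, the function
`q(m) = ℓ(m* H m)`, where `m* = σ(m)ᵀ`, is a hermitian quadratic form with polar form
`ℓ(m* H n) + ℓ(n* H m)`. With `ℓ` the `Π`-coordinate and `H` upper triangular, with entries
`(Bᵢⱼ - t Aᵢⱼ) + Aᵢⱼ Π` above the diagonal and `Aᵢᵢ Π` on it, this form realises `(A, B)`.
-/

open Polynomial

noncomputable section

/-- The quadratic `R`-algebra `S = R[Π] := R[T]/(T² - t·T + π)`. -/
abbrev Squad (R : Type) [CommRing R] (t π : R) : Type :=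
  AdjoinRoot (X ^ 2 - Polynomial.C t * X + Polynomial.C π)

/-- The image `Π` of `T` in `S = R[T]/(T² - t·T + π)`. -/
noncomputable def PiRoot (R : Type) [CommRing R] (t π : R) : Squad R t π :=
  AdjoinRoot.root _

/-- A hermitian quadratic form with values in `R` on a module `M` over
`S = R[T]/(T² - t·T + π)`, relative to the involution `σ` and the norm `Nrm` of `S`:
a function `q : M → R` together with a symmetric `R`-bilinear form `f : M × M → R`
satisfying `f(m,n) = q(m+n) - q(m) - q(n)`, `q(x·m) = N(x)·q(m)` and
`f(x·m, n) = f(m, σ(x)·n)`. -/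
structure HermitianQuadForm (R : Type) [CommRing R] (S : Type) [CommRing S] [Algebra R S]
    (σ : S → S) (Nrm : S → R) (M : Type) [AddCommGroup M] [Module S M] where
  q : M → R
  f : M → M → R
  f_symm : ∀ m n, f m n = f n m
  f_add_left : ∀ m m' n, f (m + m') n = f m n + f m' n
  f_smul_left : ∀ (r : R) (m n : M), f ((algebraMap R S r) • m) n = r * f m n
  polar : ∀ m n, f m n = q (m + n) - q m - q n
  q_smul : ∀ (x : S) (m : M), q (x • m) = Nrm x * q m
  f_conj : ∀ (x : S) (m n : M), f (x • m) n = f m (σ x • n)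

/-- The matrix `Ã` with `Ã_{ij} = A_{ij}` for `i ≠ j` and `Ã_{ii} = 2·A_{ii}`. -/
def tildeMat {R : Type} [CommRing R] {n : ℕ} (A : Matrix (Fin n) (Fin n) R) :
    Matrix (Fin n) (Fin n) R :=
  Matrix.of fun i j => if i = j then 2 * A i i else A i j

/-- The pair of matrices `(A, B)` associated to a hermitian quadratic form on `Sⁿ`:
`A_{ii} = q(eᵢ)`, `A_{ij} = f(eᵢ, eⱼ)` for `i ≠ j`, and `B_{ij} = f(eᵢ, Π·eⱼ)`. -/
noncomputable def toMatrices {R : Type} [CommRing R] {t π : R} {n : ℕ}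
    {σ : Squad R t π → Squad R t π} {Nrm : Squad R t π → R}
    (h : HermitianQuadForm R (Squad R t π) σ Nrm (Fin n → Squad R t π)) :
    Matrix (Fin n) (Fin n) R × Matrix (Fin n) (Fin n) R :=
  (Matrix.of fun i j => if i = j then h.q (Pi.single i (1 : Squad R t π))
      else h.f (Pi.single i (1 : Squad R t π)) (Pi.single j (1 : Squad R t π)),
   Matrix.of fun i j => h.f (Pi.single i (1 : Squad R t π))
      (PiRoot R t π • (Pi.single j (1 : Squad R t π) : Fin n → Squad R t π)))

namespace Squad

variable {R : Type} [CommRing R] {t π : R}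

theorem root_mul_root :
    PiRoot R t π * PiRoot R t π
      = algebraMap R _ t * PiRoot R t π - algebraMap R (Squad R t π) π := by
  have h := AdjoinRoot.eval₂_root (X ^ 2 - C t * X + C π)
  simp only [eval₂_add, eval₂_sub, eval₂_mul, eval₂_X_pow, eval₂_C, eval₂_X] at h
  rw [PiRoot, AdjoinRoot.algebraMap_eq]
  linear_combination h

theorem monic_X_sq_sub_C_mul_X_add_C : (X ^ 2 - C t * X + C π : R[X]).Monic := by
  monicity!

theorem degree_X_sq_sub_C_mul_X_add_C [Nontrivial R] :
    (X ^ 2 - C t * X + C π : R[X]).degree = 2 := by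
  compute_degree!

theorem exists_algebraMap_add_mul_root_eq (x : Squad R t π) :
    ∃ a b : R, algebraMap R _ a + algebraMap R _ b * PiRoot R t π = x := by
  induction x using AdjoinRoot.induction_on with
  | ih p =>
    rcases subsingleton_or_nontrivial R with _ | _
    · exact ⟨0, 0, by simp [Subsingleton.elim p 0]⟩
    have hdeg : (p %ₘ (X ^ 2 - C t * X + C π)).degree ≤ 1 := by
      have := degree_modByMonic_lt p (monic_X_sq_sub_C_mul_X_add_C (t := t) (π := π))
      rw [degree_X_sq_sub_C_mul_X_add_C] at this
      exact Order.le_of_lt_succ this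
    refine ⟨(p %ₘ (X ^ 2 - C t * X + C π)).coeff 0, (p %ₘ (X ^ 2 - C t * X + C π)).coeff 1, ?_⟩
    rw [← AdjoinRoot.mk_leftInverse monic_X_sq_sub_C_mul_X_add_C (AdjoinRoot.mk _ p),
      AdjoinRoot.modByMonicHom_mk, eq_X_add_C_of_degree_le_one hdeg]
    simp [PiRoot, add_comm]

theorem algebraMap_add_mul_root_eq_zero {a b : R}
    (h : algebraMap R _ a + algebraMap R _ b * PiRoot R t π = 0) : a = 0 ∧ b = 0 := by
  rcases subsingleton_or_nontrivial R with _ | _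
  · exact ⟨Subsingleton.elim _ _, Subsingleton.elim _ _⟩
  have hdvd : (X ^ 2 - C t * X + C π) ∣ C b * X + C a := by
    rw [← AdjoinRoot.mk_eq_zero]
    simpa [PiRoot, add_comm] using h
  rw [← modByMonic_eq_zero_iff_dvd monic_X_sq_sub_C_mul_X_add_C,
    (modByMonic_eq_self_iff monic_X_sq_sub_C_mul_X_add_C).2
      (degree_linear_le.trans_lt (by rw [degree_X_sq_sub_C_mul_X_add_C]; norm_num))] at hdvd
  exact ⟨by simpa using congr(($hdvd).coeff 0), by simpa using congr(($hdvd).coeff 1)⟩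

theorem algebraMap_injective : Function.Injective (algebraMap R (Squad R t π)) := by
  intro a b hab
  refine sub_eq_zero.1 (algebraMap_add_mul_root_eq_zero (t := t) (π := π) (b := 0) ?_).1
  rw [map_sub, hab, sub_self, map_zero, zero_mul, add_zero]

def basis : Module.Basis (Fin 2) R (Squad R t π) :=
  .mk (v := ![1, PiRoot R t π])
    (LinearIndependent.pair_iff.2 fun a b h => algebraMap_add_mul_root_eq_zero <| by
      rwa [Algebra.smul_def, Algebra.smul_def, mul_one] at h)
    (fun x _ => by
      obtain ⟨a, b, rfl⟩ := exists_algebraMap_add_mul_root_eq x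
      rw [Matrix.range_cons, Matrix.range_cons, Matrix.range_empty, Set.union_empty,
        Set.union_singleton, Submodule.mem_span_pair]
      exact ⟨b, a, by rw [Algebra.smul_def, Algebra.smul_def, mul_one, add_comm]⟩)

def rootCoeff : Squad R t π →ₗ[R] R := basis.coord 1

theorem rootCoeff_algebraMap_add_mul_root (a b : R) :
    rootCoeff (algebraMap R _ a + algebraMap R _ b * PiRoot R t π) = b := by
  have h : algebraMap R _ a + algebraMap R _ b * PiRoot R t π = a • basis 0 + b • basis 1 := by
    rw [basis, Module.Basis.mk_apply, Module.Basis.mk_apply, Algebra.smul_def, Algebra.smul_def]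
    simp only [Matrix.cons_val_zero, Matrix.cons_val_one, mul_one]
  rw [h, rootCoeff, map_add, map_smul, map_smul]
  simp

theorem rootCoeff_root_mul (a b : R) :
    rootCoeff (PiRoot R t π * (algebraMap R _ a + algebraMap R _ b * PiRoot R t π))
      = a + t * b := by
  have : PiRoot R t π * (algebraMap R _ a + algebraMap R _ b * PiRoot R t π)
      = algebraMap R _ (-(π * b)) + algebraMap R _ (a + t * b) * PiRoot R t π := by
    simp only [map_neg, map_mul, map_add]
    linear_combination (algebraMap R (Squad R t π) b) * root_mul_root (t := t) (π := π)
  rw [this, rootCoeff_algebraMap_add_mul_root]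

variable {σ : Squad R t π →ₐ[R] Squad R t π}

theorem algHom_involutive (hσ : σ (PiRoot R t π) = algebraMap R _ t - PiRoot R t π) :
    Function.Involutive σ := by
  have : σ.comp σ = AlgHom.id R _ := AdjoinRoot.algHom_ext <| by
    change σ (σ (PiRoot R t π)) = PiRoot R t π
    rw [hσ, map_sub, AlgHom.commutes, hσ, sub_sub_cancel]
  exact fun x => congr($this x)

theorem norm_one_add_sub {Nrm : Squad R t π → R}
    (hN : ∀ x, x * σ x = algebraMap R _ (Nrm x)) {x : Squad R t π} {r : R}
    (hx : x + σ x = algebraMap R _ r) : Nrm (1 + x) - Nrm 1 - Nrm x = r := by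
  apply algebraMap_injective (t := t) (π := π)
  have h1 := hN (1 + x)
  have h2 := hN 1
  have h3 := hN x
  rw [map_add, map_one] at h1
  rw [map_one] at h2
  rw [map_sub, map_sub, ← h1, ← h2, ← h3]
  linear_combination hx

theorem rootCoeff_conj_root_mul (hσ : σ (PiRoot R t π) = algebraMap R _ t - PiRoot R t π)
    (a b : R) :
    rootCoeff (σ (PiRoot R t π) * (algebraMap R _ a + algebraMap R _ b * PiRoot R t π)) = -a := by
  rw [hσ, sub_mul, map_sub, rootCoeff_root_mul, ← Algebra.smul_def, map_smul,
    rootCoeff_algebraMap_add_mul_root, smul_eq_mul]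
  ring

end Squad

theorem Pi.single_eq_smul_single_one {ι S : Type} [DecidableEq ι] [Semiring S] (i : ι) (x : S) :
    (Pi.single i x : ι → S) = x • Pi.single i 1 := by
  rw [← Pi.single_smul', smul_eq_mul, mul_one]

namespace Matrix

variable {S ι : Type} [CommRing S] [Fintype ι] [DecidableEq ι] (σ : S →+* S) (H : Matrix ι ι S)

theorem toLinearMapₛₗ₂'_smul_left (x : S) (m n : ι → S) :
    toLinearMapₛₗ₂' S σ (RingHom.id S) H (x • m) n
      = σ x * toLinearMapₛₗ₂' S σ (RingHom.id S) H m n := by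
  rw [LinearMap.map_smulₛₗ₂, smul_eq_mul]

theorem toLinearMapₛₗ₂'_smul_right (x : S) (m n : ι → S) :
    toLinearMapₛₗ₂' S σ (RingHom.id S) H m (x • n)
      = x * toLinearMapₛₗ₂' S σ (RingHom.id S) H m n := by
  rw [LinearMap.map_smul, smul_eq_mul]

end Matrix

namespace HermitianQuadForm

variable {R S : Type} [CommRing R] [CommRing S] [Algebra R S] {Nrm : S → R}

section Module

variable {σ : S → S} {M : Type} [AddCommGroup M] [Module S M] (h : HermitianQuadForm R S σ Nrm M)

@[ext]
theorem ext {h₁ h₂ : HermitianQuadForm R S σ Nrm M} (hq : h₁.q = h₂.q) (hf : h₁.f = h₂.f) :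
    h₁ = h₂ := by
  cases h₁; cases h₂; congr

theorem q_add (m n : M) : h.q (m + n) = h.q m + h.q n + h.f m n := by
  rw [h.polar]; ring

theorem f_add_right (m n n' : M) : h.f m (n + n') = h.f m n + h.f m n' := by
  rw [h.f_symm, h.f_add_left, h.f_symm n, h.f_symm n']

theorem f_smul_right (r : R) (m n : M) : h.f m (algebraMap R S r • n) = r * h.f m n := by
  rw [h.f_symm, h.f_smul_left, h.f_symm]

theorem f_smul_smul (x y : S) (m n : M) : h.f (x • m) (y • n) = h.f m ((σ x * y) • n) := by
  rw [h.f_conj, mul_smul]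

theorem f_algebraMap_add_mul_smul (a b : R) (s : S) (m n : M) :
    h.f m ((algebraMap R S a + algebraMap R S b * s) • n) = a * h.f m n + b * h.f m (s • n) := by
  rw [add_smul, mul_smul, f_add_right, f_smul_right, f_smul_right]

theorem f_smul_self (x : S) (m : M) :
    h.f m (x • m) = (Nrm (1 + x) - Nrm 1 - Nrm x) * h.q m := by
  have h1 := h.q_smul 1 m
  have h2 := h.q_smul (1 + x) m
  rw [one_smul] at h1
  rw [add_smul, one_smul] at h2
  rw [h.polar, h2, h.q_smul]
  linear_combination -h1

end Module

section Pi

variable {σ : S → S} {ι : Type} [Fintype ι] [DecidableEq ι]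
  (h : HermitianQuadForm R S σ Nrm (ι → S))

theorem f_eq_sum_single (m n : ι → S) :
    h.f m n = ∑ i, ∑ j, h.f (Pi.single i (m i)) (Pi.single j (n j)) := by
  let fLeft (n : ι → S) : (ι → S) →+ R := .mk' (h.f · n) fun _ _ => h.f_add_left _ _ _
  let fRight (m : ι → S) : (ι → S) →+ R := .mk' (h.f m) (h.f_add_right m)
  conv_lhs => rw [← Finset.univ_sum_single m, ← Finset.univ_sum_single n]
  exact (map_sum (fLeft _) _ _).trans (Finset.sum_congr rfl fun i _ => map_sum (fRight _) _ _)

theorem f_eq_of_forall_single {h₁ h₂ : HermitianQuadForm R S σ Nrm (ι → S)}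
    (hf : ∀ i j x y, h₁.f (Pi.single i x) (Pi.single j y) = h₂.f (Pi.single i x) (Pi.single j y)) :
    h₁.f = h₂.f := by
  funext m n
  rw [f_eq_sum_single, f_eq_sum_single]
  simp only [hf]

theorem q_eq_of_f_eq {h₁ h₂ : HermitianQuadForm R S σ Nrm (ι → S)} (hf : h₁.f = h₂.f)
    (hq : ∀ i, h₁.q (Pi.single i 1) = h₂.q (Pi.single i 1)) : h₁.q = h₂.q := by
  let d : (ι → S) →+ R := AddMonoidHom.mk' (fun m => h₁.q m - h₂.q m) fun m n => by
    rw [q_add, q_add, hf]; ring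
  funext m
  have hd : ∀ i, d (Pi.single i (m i)) = 0 := fun i => by
    rw [AddMonoidHom.mk'_apply, Pi.single_eq_smul_single_one, q_smul, q_smul, hq, sub_self]
  rw [← sub_eq_zero, ← Finset.univ_sum_single m]
  exact (map_sum d _ _).trans (Finset.sum_eq_zero fun i _ => hd i)

end Pi

section OfMatrix

open Matrix

variable {ι : Type} [Fintype ι] [DecidableEq ι]
variable (σ : S →ₐ[R] S) (hinv : Function.Involutive σ) (hN : ∀ x, x * σ x = algebraMap R S (Nrm x))
  (ℓ : S →ₗ[R] R) (H : Matrix ι ι S)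

def ofMatrix : HermitianQuadForm R S σ Nrm (ι → S) where
  q m := ℓ (toLinearMapₛₗ₂' S (σ : S →+* S) (RingHom.id S) H m m)
  f m n := ℓ (toLinearMapₛₗ₂' S (σ : S →+* S) (RingHom.id S) H m n)
    + ℓ (toLinearMapₛₗ₂' S (σ : S →+* S) (RingHom.id S) H n m)
  f_symm m n := add_comm _ _
  f_add_left m m' n := by simp only [map_add, LinearMap.add_apply]; ring
  f_smul_left r m n := by
    simp only [toLinearMapₛₗ₂'_smul_left, RingHom.coe_coe, AlgHom.commutes, ← Algebra.smul_def,
      map_smul, smul_eq_mul, mul_add]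
  polar m n := by simp only [map_add, LinearMap.add_apply]; ring
  q_smul x m := by
    rw [toLinearMapₛₗ₂'_smul_left, toLinearMapₛₗ₂'_smul_right, RingHom.coe_coe, ← mul_assoc,
      mul_comm (σ x), hN, ← Algebra.smul_def, map_smul, smul_eq_mul]
  f_conj x m n := by
    simp only [toLinearMapₛₗ₂'_smul_left, toLinearMapₛₗ₂'_smul_right, RingHom.coe_coe, hinv x]

theorem ofMatrix_q_single (i : ι) : (ofMatrix σ hinv hN ℓ H).q (Pi.single i 1) = ℓ (H i i) := by
  simp [ofMatrix]

theorem ofMatrix_f_single_single (i j : ι) :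
    (ofMatrix σ hinv hN ℓ H).f (Pi.single i 1) (Pi.single j 1) = ℓ (H i j) + ℓ (H j i) := by
  simp [ofMatrix]

theorem ofMatrix_f_single_smul_single (i j : ι) (x : S) :
    (ofMatrix σ hinv hN ℓ H).f (Pi.single i 1) (x • Pi.single j 1)
      = ℓ (x * H i j) + ℓ (σ x * H j i) := by
  simp [ofMatrix]

end OfMatrix

end HermitianQuadForm

namespace Squad

variable {R : Type} [CommRing R] {t π : R} {σ : Squad R t π →ₐ[R] Squad R t π}
  {Nrm : Squad R t π → R} {n : ℕ}

theorem f_single_one_self (hN : ∀ x, x * σ x = algebraMap R _ (Nrm x))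
    (h : HermitianQuadForm R (Squad R t π) σ Nrm (Fin n → Squad R t π)) (i : Fin n) :
    h.f (Pi.single i 1) (Pi.single i 1) = 2 * h.q (Pi.single i 1) := by
  have h2 : 1 + σ 1 = algebraMap R (Squad R t π) 2 := by rw [map_one, map_ofNat, one_add_one_eq_two]
  simpa [norm_one_add_sub hN h2] using h.f_smul_self 1 (Pi.single i 1)

theorem tildeMat_toMatrices_fst (hN : ∀ x, x * σ x = algebraMap R _ (Nrm x))
    (h : HermitianQuadForm R (Squad R t π) σ Nrm (Fin n → Squad R t π)) (i j : Fin n) :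
    tildeMat (toMatrices h).1 i j = h.f (Pi.single i 1) (Pi.single j 1) := by
  rcases eq_or_ne i j with rfl | hij
  · simp [tildeMat, toMatrices, f_single_one_self hN]
  · simp [tildeMat, toMatrices, hij]

theorem toMatrices_snd_diag (hσ : σ (PiRoot R t π) = algebraMap R _ t - PiRoot R t π)
    (hN : ∀ x, x * σ x = algebraMap R _ (Nrm x))
    (h : HermitianQuadForm R (Squad R t π) σ Nrm (Fin n → Squad R t π)) (i : Fin n) :
    (toMatrices h).2 i i = t * (toMatrices h).1 i i := by
  have ht : PiRoot R t π + σ (PiRoot R t π) = algebraMap R _ t := by rw [hσ]; ring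
  simpa [toMatrices, norm_one_add_sub hN ht] using h.f_smul_self (PiRoot R t π) (Pi.single i 1)

theorem f_single_single (hN : ∀ x, x * σ x = algebraMap R _ (Nrm x))
    (h : HermitianQuadForm R (Squad R t π) σ Nrm (Fin n → Squad R t π)) (i j : Fin n)
    {x y : Squad R t π} {a b : R}
    (hab : algebraMap R _ a + algebraMap R _ b * PiRoot R t π = σ x * y) :
    h.f (Pi.single i x) (Pi.single j y)
      = a * tildeMat (toMatrices h).1 i j + b * (toMatrices h).2 i j := by
  rw [Pi.single_eq_smul_single_one i x, Pi.single_eq_smul_single_one j y, h.f_smul_smul, ← hab,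
    h.f_algebraMap_add_mul_smul, tildeMat_toMatrices_fst hN]
  rfl

theorem toMatrices_snd_add_transpose (hσ : σ (PiRoot R t π) = algebraMap R _ t - PiRoot R t π)
    (hN : ∀ x, x * σ x = algebraMap R _ (Nrm x))
    (h : HermitianQuadForm R (Squad R t π) σ Nrm (Fin n → Squad R t π)) :
    (toMatrices h).2 + (toMatrices h).2.transpose = t • tildeMat (toMatrices h).1 := by
  ext i j
  have hroot : algebraMap R _ t + algebraMap R _ (-1) * PiRoot R t π = σ (PiRoot R t π) * 1 := by
    rw [hσ, map_neg, map_one]; ring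
  have hji : (toMatrices h).2 j i = h.f (Pi.single i (PiRoot R t π)) (Pi.single j 1) := by
    rw [h.f_symm, Pi.single_eq_smul_single_one i (PiRoot R t π)]; rfl
  rw [Matrix.add_apply, Matrix.transpose_apply, hji, f_single_single hN h i j hroot,
    Matrix.smul_apply, smul_eq_mul]
  ring

theorem toMatrices_injective (hN : ∀ x, x * σ x = algebraMap R _ (Nrm x)) :
    Function.Injective (toMatrices (σ := σ) (Nrm := Nrm) (n := n)) := by
  intro h₁ h₂ heq
  have hf : h₁.f = h₂.f := HermitianQuadForm.f_eq_of_forall_single fun i j x y => by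
    obtain ⟨a, b, hab⟩ := exists_algebraMap_add_mul_root_eq (σ x * y)
    rw [f_single_single hN h₁ i j hab, f_single_single hN h₂ i j hab, heq]
  have hq : h₁.q = h₂.q := HermitianQuadForm.q_eq_of_f_eq hf fun i => by
    simpa [toMatrices] using congr(($heq).1 i i)
  exact HermitianQuadForm.ext hq hf

theorem toMatrices_fst_isSymm
    (h : HermitianQuadForm R (Squad R t π) σ Nrm (Fin n → Squad R t π)) :
    (toMatrices h).1.IsSymm := by
  refine Matrix.IsSymm.ext fun i j => ?_
  rcases eq_or_ne i j with rfl | hij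
  · rfl
  · simp [toMatrices, hij, hij.symm, h.f_symm]

theorem toMatrices_ofMatrix (hσ : σ (PiRoot R t π) = algebraMap R _ t - PiRoot R t π)
    (hN : ∀ x, x * σ x = algebraMap R _ (Nrm x)) (c d : Matrix (Fin n) (Fin n) R) :
    toMatrices (HermitianQuadForm.ofMatrix σ (algHom_involutive hσ) hN rootCoeff
        (.of fun i j => algebraMap R _ (c i j) + algebraMap R _ (d i j) * PiRoot R t π))
      = (.of fun i j => if i = j then d i i else d i j + d j i,
         .of fun i j => c i j - c j i + t * d i j) := by
  refine Prod.ext (Matrix.ext fun i j => ?_) (Matrix.ext fun i j => ?_)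
  · rcases eq_or_ne i j with rfl | hij
    · simp only [toMatrices, Matrix.of_apply, if_true, HermitianQuadForm.ofMatrix_q_single,
        rootCoeff_algebraMap_add_mul_root]
    · simp only [toMatrices, Matrix.of_apply, if_neg hij,
        HermitianQuadForm.ofMatrix_f_single_single, rootCoeff_algebraMap_add_mul_root]
  · simp only [toMatrices, Matrix.of_apply, HermitianQuadForm.ofMatrix_f_single_smul_single,
      rootCoeff_root_mul, rootCoeff_conj_root_mul hσ]
    ring

theorem exists_toMatrices_eq (hσ : σ (PiRoot R t π) = algebraMap R _ t - PiRoot R t π)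
    (hN : ∀ x, x * σ x = algebraMap R _ (Nrm x)) {A B : Matrix (Fin n) (Fin n) R}
    (hA : A.IsSymm) (hB : B + B.transpose = t • tildeMat A) (hdiag : ∀ i, B i i = t * A i i) :
    ∃ h : HermitianQuadForm R (Squad R t π) σ Nrm (Fin n → Squad R t π), toMatrices h = (A, B) := by
  refine ⟨_, (toMatrices_ofMatrix hσ hN (.of fun i j => if i < j then B i j - t * A i j else 0)
    (.of fun i j => if i ≤ j then A i j else 0)).trans ?_⟩
  refine Prod.ext (Matrix.ext fun i j => ?_) (Matrix.ext fun i j => ?_)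
  all_goals rcases lt_trichotomy i j with hij | rfl | hij
  · simp [hij.ne, hij.le, hij.not_ge]
  · simp
  · simp [hij.ne', hij.le, hij.not_ge, hA.apply i j]
  · simp [hij, hij.not_gt, hij.le]
  · simp [hdiag]
  · have hBij := congr($hB i j)
    simp only [Matrix.add_apply, Matrix.transpose_apply, Matrix.smul_apply, tildeMat,
      Matrix.of_apply, if_neg hij.ne', smul_eq_mul] at hBij
    simp only [Matrix.of_apply, hij, hij.not_gt, hij.not_ge, hA.apply i j, ↓reduceIte, mul_zero,
      zero_sub, neg_sub, add_zero]
    linear_combination -hBij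

end Squad

theorem statement11_general (R : Type) [CommRing R] (t π : R)
    (σ : Squad R t π →ₐ[R] Squad R t π)
    (hσ : σ (PiRoot R t π) = algebraMap R (Squad R t π) t - PiRoot R t π)
    (Nrm : Squad R t π → R)
    (hN : ∀ x : Squad R t π, x * σ x = algebraMap R (Squad R t π) (Nrm x))
    (n : ℕ) :
    Function.Injective
      (toMatrices (R := R) (t := t) (π := π) (n := n) (σ := ⇑σ) (Nrm := Nrm)) ∧
    Set.range (toMatrices (R := R) (t := t) (π := π) (n := n) (σ := ⇑σ) (Nrm := Nrm)) =
      {AB : Matrix (Fin n) (Fin n) R × Matrix (Fin n) (Fin n) R |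
        AB.1.IsSymm ∧
        AB.2 + AB.2.transpose = t • tildeMat AB.1 ∧
        ∀ i, AB.2 i i = t * AB.1 i i} := by
  refine ⟨Squad.toMatrices_injective hN, Set.ext fun AB => ⟨?_, ?_⟩⟩
  · rintro ⟨h, rfl⟩
    exact ⟨Squad.toMatrices_fst_isSymm h, Squad.toMatrices_snd_add_transpose hσ hN h,
      Squad.toMatrices_snd_diag hσ hN h⟩
  · rintro ⟨hA, hB, hdiag⟩
    exact Squad.exists_toMatrices_eq hσ hN hA hB hdiag

theorem statement11 (R : Type) [CommRing R] (t π : R)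
    (σ : Squad R t π →ₐ[R] Squad R t π)
    (hσ : σ (PiRoot R t π) = algebraMap R (Squad R t π) t - PiRoot R t π)
    (Nrm : Squad R t π → R)
    (hN : ∀ x : Squad R t π, x * σ x = algebraMap R (Squad R t π) (Nrm x))
    (n : ℕ) (hn : 1 ≤ n) :
    Function.Injective
      (toMatrices (R := R) (t := t) (π := π) (n := n) (σ := ⇑σ) (Nrm := Nrm)) ∧
    Set.range (toMatrices (R := R) (t := t) (π := π) (n := n) (σ := ⇑σ) (Nrm := Nrm)) =
      {AB : Matrix (Fin n) (Fin n) R × Matrix (Fin n) (Fin n) R |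
        AB.1.IsSymm ∧
        AB.2 + AB.2.transpose = t • tildeMat AB.1 ∧
        ∀ i, AB.2 i i = t * AB.1 i i} :=
  statement11_general R t π σ hσ Nrm hN n
end
end

section
/- Let R be a commutative ring, t, π ∈ R, and let n be an odd positive integer. Let A and B be n×n matrices over R with A symmetric, and define the n×n matrix Ã by Ã_{ij} = A_{ij} for i ≠ j and Ã_{ii} = 2·A_{ii}. Assume B + Bᵀ = t·Ã and B_{ii} = t·A_{ii} for every i. Then 4π − t² divides the determinant of the 2n×2n block matrix [[Ã, B], [Bᵀ, π·Ã]] in R. -/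
open Matrix MvPolynomial

section Key

/-- If block ₂₂ is zero and one off-diagonal block is singular, the block determinant is zero. -/
lemma aux_det_zero {S : Type*} [CommRing S] {n : ℕ} (a b c : Matrix (Fin n) (Fin n) S)
    (hb : b.det = 0) :
    (Matrix.fromBlocks a b c (0 : Matrix (Fin n) (Fin n) S)).det = 0 := by
  set w : Matrix (Fin n ⊕ Fin n) (Fin n ⊕ Fin n) S := fromBlocks 0 1 1 0 with hwdef
  have hw : w * w = 1 := by
    rw [hwdef, fromBlocks_multiply, ← fromBlocks_one]
    simp
  have h1 : fromBlocks a b c 0 * w = fromBlocks b a 0 c := by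
    rw [hwdef, fromBlocks_multiply]
    simp
  have h2 : (fromBlocks a b c (0 : Matrix (Fin n) (Fin n) S)).det * w.det = 0 := by
    rw [← det_mul, h1, det_fromBlocks_zero₂₁, hb, zero_mul]
  have h3 : w.det * w.det = 1 := by rw [← det_mul, hw, det_one]
  calc (fromBlocks a b c (0 : Matrix (Fin n) (Fin n) S)).det
      = (fromBlocks a b c (0 : Matrix (Fin n) (Fin n) S)).det * (w.det * w.det) := by
        rw [h3, mul_one]
    _ = ((fromBlocks a b c (0 : Matrix (Fin n) (Fin n) S)).det * w.det) * w.det := by ring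
    _ = 0 := by rw [h2, zero_mul]

/-- The "doubling" congruence: `4π - t²` divides `2^(4n)` times the block determinant,
over any commutative ring, provided `B - Bᵀ` is singular. -/
lemma key_lemma {S : Type*} [CommRing S] {n : ℕ} (t π : S) (At B : Matrix (Fin n) (Fin n) S)
    (hB : B + Bᵀ = t • At) (hC : (B - Bᵀ).det = 0) :
    (4 * π - t ^ 2) ∣ (2 : S) ^ (4 * n) * (fromBlocks At B Bᵀ (π • At)).det := by
  set d : S := 4 * π - t ^ 2 with hddef
  set C : Matrix (Fin n) (Fin n) S := B - Bᵀ with hCdef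
  set M : Matrix (Fin n ⊕ Fin n) (Fin n ⊕ Fin n) S := fromBlocks At B Bᵀ (π • At) with hMdef
  set E : Matrix (Fin n ⊕ Fin n) (Fin n ⊕ Fin n) S :=
    fromBlocks ((2 : S) • 1) ((-t) • 1) 0 ((2 : S) • 1) with hEdef
  have hBT : Bᵀ = t • At - B := by rw [← hB]; abel
  have hN : Eᵀ * (M * E) =
      fromBlocks ((4 : S) • At) ((2 : S) • C) ((-2 : S) • C) (d • At) := by
    rw [hEdef, hMdef, fromBlocks_transpose, fromBlocks_multiply, fromBlocks_multiply]
    rw [fromBlocks_inj]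
    refine ⟨?_, ?_, ?_, ?_⟩ <;>
    · simp only [hCdef, hBT, hddef]
      ext i j
      simp [Matrix.mul_apply, Matrix.one_apply, Finset.mul_sum, mul_ite, ite_mul,
        Matrix.smul_apply, Matrix.sub_apply, Matrix.add_apply, smul_eq_mul]
      ring
  have hdetE : E.det = 2 ^ (2 * n) := by
    rw [hEdef, det_fromBlocks_zero₂₁, det_smul, det_one, Fintype.card_fin]
    ring
  have hdetN : (Eᵀ * (M * E)).det = 2 ^ (4 * n) * M.det := by
    rw [det_mul, det_mul, det_transpose, hdetE]
    ring
  set I : Ideal S := Ideal.span {d} with hIdef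
  set q : S →+* S ⧸ I := Ideal.Quotient.mk I with hqdef
  have hqd : q d = 0 := by
    rw [hqdef, Ideal.Quotient.eq_zero_iff_mem, hIdef]
    exact Ideal.subset_span rfl
  have hmap : q (2 ^ (4 * n) * M.det) = 0 := by
    rw [← hdetN, RingHom.map_det, RingHom.mapMatrix_apply, hN, fromBlocks_map]
    have hz : (d • At).map q = (0 : Matrix (Fin n) (Fin n) (S ⧸ I)) := by
      ext i j
      simp only [Matrix.map_apply, Matrix.smul_apply, smul_eq_mul, _root_.map_mul, hqd,
        zero_mul, Matrix.zero_apply]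
    rw [hz]
    apply aux_det_zero
    have : ((2 : S) • C).map q = ((q : S →+* S ⧸ I).mapMatrix ((2 : S) • C)) := rfl
    rw [this, ← RingHom.map_det, det_smul, hCdef, hC, mul_zero, map_zero]
  rw [← Ideal.mem_span_singleton, ← hIdef, ← Ideal.Quotient.eq_zero_iff_mem]
  exact hmap

end Key

section Cancel

/-- In `ℤ[x_v]`, `2` is regular modulo `4·X v₁ - (X v₂)²`. -/
lemma cancel_two {V : Type} (v₁ v₂ : V) (y : MvPolynomial V ℤ)
    (h : (4 * X v₁ - X v₂ ^ 2) ∣ 2 * y) : (4 * X v₁ - X v₂ ^ 2) ∣ y := by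
  obtain ⟨g, hg⟩ := h
  set ψ : MvPolynomial V ℤ →+* MvPolynomial V (ZMod 2) :=
    (MvPolynomial.map (Int.castRingHom (ZMod 2))) with hψ
  have h2 : ψ 2 = 0 := by
    rw [hψ]
    have : (2 : MvPolynomial V ℤ) = C 2 := by norm_num
    rw [this, map_C]
    norm_num
    decide
  have h4 : ψ 4 = 0 := by
    rw [hψ]
    have : (4 : MvPolynomial V ℤ) = C 4 := by norm_num
    rw [this, map_C]
    norm_num
    decide
  have happ := congrArg ψ hg
  rw [_root_.map_mul, h2, zero_mul, _root_.map_mul, map_sub, _root_.map_mul, h4,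
    zero_mul, map_pow] at happ
  rw [hψ, map_X] at happ
  have hXg : (X v₂ : MvPolynomial V (ZMod 2)) ^ 2 * ψ g = 0 := by
    have := happ.symm
    rw [zero_sub, neg_mul] at this
    exact neg_eq_zero.mp this
  have hψg : ψ g = 0 := by
    rcases mul_eq_zero.mp hXg with h | h
    · exact absurd h (pow_ne_zero 2 (X_ne_zero v₂))
    · exact h
  have h2g : (C 2 : MvPolynomial V ℤ) ∣ g := by
    rw [MvPolynomial.C_dvd_iff_dvd_coeff]
    intro m
    have := congrArg (coeff m) hψg
    rw [hψ, coeff_map, coeff_zero] at this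
    exact_mod_cast (ZMod.intCast_zmod_eq_zero_iff_dvd _ 2).mp this
  obtain ⟨g', hg'⟩ := h2g
  refine ⟨g', ?_⟩
  have hC2 : (C 2 : MvPolynomial V ℤ) = 2 := by norm_num
  rw [hg', hC2] at hg
  have h2ne : (2 : MvPolynomial V ℤ) ≠ 0 := two_ne_zero
  apply mul_left_cancel₀ h2ne
  rw [hg]; ring

lemma cancel_two_pow {V : Type} (v₁ v₂ : V) (y : MvPolynomial V ℤ) (k : ℕ)
    (h : (4 * X v₁ - X v₂ ^ 2) ∣ 2 ^ k * y) : (4 * X v₁ - X v₂ ^ 2) ∣ y := by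
  induction k with
  | zero => simpa using h
  | succ m ih =>
      apply ih
      apply cancel_two v₁ v₂
      rw [show (2 : MvPolynomial V ℤ) * (2 ^ m * y) = 2 ^ (m + 1) * y by ring]
      exact h

end Cancel

section Generic

abbrev GV (n : ℕ) : Type := Fin 2 ⊕ ((Fin n × Fin n) ⊕ (Fin n × Fin n))

noncomputable def tgen (n : ℕ) : MvPolynomial (GV n) ℤ := X (Sum.inl 0)
noncomputable def pgen (n : ℕ) : MvPolynomial (GV n) ℤ := X (Sum.inl 1)

noncomputable def Agen (n : ℕ) : Matrix (Fin n) (Fin n) (MvPolynomial (GV n) ℤ) :=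
  Matrix.of fun i j => X (Sum.inr (Sum.inl (min i j, max i j)))

noncomputable def Bgen (n : ℕ) : Matrix (Fin n) (Fin n) (MvPolynomial (GV n) ℤ) :=
  Matrix.of fun i j =>
    if i = j then tgen n * Agen n i i
    else if i < j then X (Sum.inr (Sum.inr (i, j)))
    else tgen n * Agen n i j - X (Sum.inr (Sum.inr (j, i)))

lemma Agen_symm (n : ℕ) (i j : Fin n) : Agen n i j = Agen n j i := by
  simp [Agen, min_comm, max_comm]

lemma Bgen_rel (n : ℕ) : Bgen n + (Bgen n)ᵀ = tgen n • tildeMat (Agen n) := by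
  ext i j
  simp only [Matrix.add_apply, Matrix.transpose_apply, Matrix.smul_apply, tildeMat,
    Matrix.of_apply, smul_eq_mul, Bgen]
  rcases lt_trichotomy i j with h | h | h
  · rw [if_neg h.ne, if_pos h, if_neg h.ne', if_neg (not_lt.mpr h.le), if_neg h.ne]
    rw [Agen_symm n j i]
    ring
  · subst h
    simp only [eq_self_iff_true, if_true]
    ring
  · rw [if_neg h.ne', if_neg (not_lt.mpr h.le), if_neg h.ne, if_pos h, if_neg h.ne']
    ring

lemma Cgen_det (n : ℕ) (hodd : Odd n) : (Bgen n - (Bgen n)ᵀ).det = 0 := by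
  set C := Bgen n - (Bgen n)ᵀ with hC
  have hT : Cᵀ = -C := by
    rw [hC, Matrix.transpose_sub, Matrix.transpose_transpose]
    abel
  have h1 : C.det = -C.det := by
    conv_lhs => rw [← Matrix.det_transpose, hT, Matrix.det_neg]
    rw [Fintype.card_fin, hodd.neg_one_pow]
    ring
  have h2 : (2 : MvPolynomial (GV n) ℤ) * C.det = 0 := by linear_combination h1
  rcases mul_eq_zero.mp h2 with h | h
  · exact absurd h two_ne_zero
  · exact h

lemma generic_dvd (n : ℕ) (hodd : Odd n) :
    (4 * pgen n - tgen n ^ 2) ∣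
      (fromBlocks (tildeMat (Agen n)) (Bgen n) (Bgen n)ᵀ
        (pgen n • tildeMat (Agen n))).det := by
  have h := key_lemma (tgen n) (pgen n) (tildeMat (Agen n)) (Bgen n) (Bgen_rel n)
    (Cgen_det n hodd)
  have h2 : (4 * X (Sum.inl 1 : GV n) - X (Sum.inl 0 : GV n) ^ 2) ∣
      2 ^ (4 * n) * (fromBlocks (tildeMat (Agen n)) (Bgen n) (Bgen n)ᵀ
        (pgen n • tildeMat (Agen n))).det := by
    simpa only [tgen, pgen] using h
  have h3 := cancel_two_pow (Sum.inl 1 : GV n) (Sum.inl 0 : GV n) _ (4 * n) h2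
  simpa only [tgen, pgen] using h3

end Generic

theorem statement12 (R : Type) [CommRing R] (t π : R) (n : ℕ) (hodd : Odd n) (hpos : 0 < n)
    (A B : Matrix (Fin n) (Fin n) R) (hA : A.IsSymm)
    (hB : B + B.transpose = t • tildeMat A)
    (hBd : ∀ i, B i i = t * A i i) :
    (4 * π - t ^ 2) ∣
      (Matrix.fromBlocks (tildeMat A) B B.transpose (π • tildeMat A)).det := by
  classical
  have hB' : ∀ i j, B i j + B j i = t * tildeMat A i j := by
    intro i j
    have := congrFun (congrFun hB i) j
    simpa using this
  set v : GV n → R :=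
    Sum.elim ![t, π] (Sum.elim (fun p => A p.1 p.2) (fun p => B p.1 p.2)) with hv
  set φ : MvPolynomial (GV n) ℤ →+* R := (MvPolynomial.aeval v).toRingHom with hφ
  have hφX : ∀ w, φ (X w) = v w := fun w => aeval_X v w
  have hφt : φ (tgen n) = t := by rw [tgen, hφX]; simp [hv]
  have hφπ : φ (pgen n) = π := by rw [pgen, hφX]; simp [hv]
  have hφA : ∀ i j, φ (Agen n i j) = A i j := by
    intro i j
    rw [show Agen n i j = X (Sum.inr (Sum.inl (min i j, max i j))) from rfl, hφX]
    rcases le_total i j with h | h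
    · simp [hv, min_eq_left h, max_eq_right h]
    · simp only [hv, min_eq_right h, max_eq_left h, Sum.elim_inr]
      exact hA.apply i j
  have hφB : ∀ i j, φ (Bgen n i j) = B i j := by
    intro i j
    rw [show Bgen n i j = (if i = j then tgen n * Agen n i i
      else if i < j then X (Sum.inr (Sum.inr (i, j)))
      else tgen n * Agen n i j - X (Sum.inr (Sum.inr (j, i)))) from rfl]
    rcases lt_trichotomy i j with h | h | h
    · rw [if_neg h.ne, if_pos h, hφX]
      simp [hv]
    · subst h
      rw [if_pos rfl, _root_.map_mul, hφt, hφA, (hBd i).symm]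
    · rw [if_neg h.ne', if_neg (not_lt.mpr h.le), map_sub, _root_.map_mul, hφt, hφA, hφX]
      have hji := hB' j i
      rw [tildeMat, Matrix.of_apply, if_neg h.ne, hA.apply i j] at hji
      have hvv : v (Sum.inr (Sum.inr (j, i))) = B j i := by simp [hv]
      rw [hvv]
      linear_combination -hji
  have hφtilde : (tildeMat (Agen n)).map φ = tildeMat A := by
    ext i j
    rw [Matrix.map_apply, tildeMat, tildeMat, Matrix.of_apply, Matrix.of_apply]
    by_cases h : i = j
    · rw [if_pos h, if_pos h, _root_.map_mul, hφA, map_ofNat]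
    · rw [if_neg h, if_neg h, hφA]
  have hM : ((fromBlocks (tildeMat (Agen n)) (Bgen n) (Bgen n)ᵀ
      (pgen n • tildeMat (Agen n))).map φ)
      = fromBlocks (tildeMat A) B Bᵀ (π • tildeMat A) := by
    rw [fromBlocks_map, fromBlocks_inj]
    refine ⟨hφtilde, ?_, ?_, ?_⟩
    · ext i j; exact hφB i j
    · ext i j
      rw [Matrix.map_apply, Matrix.transpose_apply, Matrix.transpose_apply]
      exact hφB j i
    · ext i j
      rw [Matrix.map_apply, Matrix.smul_apply, Matrix.smul_apply, smul_eq_mul,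
        smul_eq_mul, _root_.map_mul, hφπ]
      have : φ (tildeMat (Agen n) i j) = tildeMat A i j := by
        rw [← Matrix.map_apply (f := φ), hφtilde]
      rw [this]
  have hdvd := generic_dvd n hodd
  have hmapped := map_dvd φ hdvd
  rw [map_sub, _root_.map_mul, map_pow, hφt, hφπ, map_ofNat] at hmapped
  rw [RingHom.map_det, RingHom.mapMatrix_apply, hM] at hmapped
  exact hmapped
end

section
/- Let ϖ ∈ m_C be a nonzero element. Then the commutative square formed by the canonical localization maps W(O_C) → W(O_C)[1/p], W(O_C) → W(O_C)[1/[ϖ]], W(O_C)[1/p] → W(O_C)[1/(p·[ϖ])] and W(O_C)[1/[ϖ]] → W(O_C)[1/(p·[ϖ])] is a pullback square of commutative rings; equivalently, the canonical ring homomorphism from W(O_C) to the fiber product W(O_C)[1/p] ×_{W(O_C)[1/(p·[ϖ])]} W(O_C)[1/[ϖ]] is bijective. -/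
/-!
STATEMENT 15: Let `ϖ ∈ m_C` be nonzero.  The square of canonical localization maps
`W(O_C) → W(O_C)[1/p]`, `W(O_C) → W(O_C)[1/[ϖ]]`,
`W(O_C)[1/p] → W(O_C)[1/(p·[ϖ])]`, `W(O_C)[1/[ϖ]] → W(O_C)[1/(p·[ϖ])]`
is a pullback square of commutative rings: the canonical map from `W(O_C)` to the fiber
product is bijective (stated elementwise: the pair map is injective and every compatible
pair of elements comes from `W(O_C)`).
-/

noncomputable section

section Aux

variable {p : ℕ} [Fact p.Prime] {R : Type} [CommRing R]

open WittVector

lemma aux_exists_verschiebung {x : WittVector p R} (h : x.coeff 0 = 0) :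
    ∃ y : WittVector p R, x = WittVector.verschiebung y := by
  refine ⟨x.shift 1, ?_⟩
  have := WittVector.eq_iterate_verschiebung (x := x) (n := 1) ?_
  · simpa using this
  · intro i hi
    interval_cases i
    exact h

lemma aux_p_dvd [CharP R p] [PerfectRing R p] {x : WittVector p R} (h : x.coeff 0 = 0) :
    ∃ c : WittVector p R, x = (p : WittVector p R) * c := by
  obtain ⟨y, rfl⟩ := aux_exists_verschiebung h
  refine ⟨(WittVector.frobeniusEquiv p R).symm y, ?_⟩
  have h1 : WittVector.frobenius ((WittVector.frobeniusEquiv p R).symm y) = y :=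
    (WittVector.frobeniusEquiv p R).apply_symm_apply y
  have := WittVector.verschiebung_frobenius ((WittVector.frobeniusEquiv p R).symm y)
  rw [h1] at this
  rw [this]
  ring

lemma aux_p_ne_zero [CharP R p] [Nontrivial R] : (p : WittVector p R) ≠ 0 := by
  intro h
  have h1 : WittVector.verschiebung (WittVector.frobenius (1 : WittVector p R))
      = (1 : WittVector p R) * p := WittVector.verschiebung_frobenius 1
  rw [map_one, one_mul, h] at h1
  have h2 := WittVector.verschiebung_coeff_succ (1 : WittVector p R) 0
  rw [h1] at h2
  rw [WittVector.zero_coeff, WittVector.one_coeff_zero] at h2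
  exact zero_ne_one h2

lemma aux_key [CharP R p] [IsDomain R] [PerfectRing R p] {ϖ : R} (hϖ : ϖ ≠ 0) :
    ∀ (n m : ℕ) (a b : WittVector p R),
      WittVector.teichmuller p ϖ ^ m * a = (p : WittVector p R) ^ n * b →
      ∃ c : WittVector p R, a = (p : WittVector p R) ^ n * c := by
  intro n
  induction n with
  | zero => intro m a b h; exact ⟨a, by simp⟩
  | succ n ih =>
    intro m a b h
    have hca : a.coeff 0 = 0 := by
      have h0 := congrArg (WittVector.constantCoeff : WittVector p R →+* R) h
      simp only [map_mul, map_pow, map_natCast] at h0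
      rw [CharP.cast_eq_zero R p] at h0
      have hct : (WittVector.constantCoeff : WittVector p R →+* R)
          (WittVector.teichmuller p ϖ) = ϖ := WittVector.teichmuller_coeff_zero p ϖ
      rw [hct] at h0
      simp only [zero_pow (Nat.succ_ne_zero n), zero_mul] at h0
      have : WittVector.constantCoeff a = 0 :=
        (mul_eq_zero.mp h0).resolve_left (pow_ne_zero m hϖ)
      exact this
    obtain ⟨a', rfl⟩ := aux_p_dvd hca
    have hp : (p : WittVector p R) ≠ 0 := aux_p_ne_zero
    have h2 : (p : WittVector p R) * (WittVector.teichmuller p ϖ ^ m * a')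
        = (p : WittVector p R) * ((p : WittVector p R) ^ n * b) := by
      rw [pow_succ] at h; ring_nf at h ⊢; linear_combination h
    have h3 := mul_left_cancel₀ hp h2
    obtain ⟨c, hc⟩ := ih m a' b h3
    exact ⟨c, by rw [hc, pow_succ]; ring⟩

end Aux

lemma OC_perfect (p : ℕ) [Fact p.Prime] (C : Type) [NontriviallyNormedField C] [CharP C p]
    [PerfectRing C p] (hna : IsNonarchimedean (norm : C → ℝ)) :
    PerfectRing (OC C hna) p := by
  constructor
  constructor
  · intro x y h
    have h' : (x : C) ^ p = (y : C) ^ p := by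
      have := congrArg (Subtype.val) h
      simpa [frobenius_def] using this
    have : frobenius C p (x : C) = frobenius C p (y : C) := by
      simpa [frobenius_def] using h'
    exact Subtype.ext ((frobeniusEquiv C p).injective this)
  · intro x
    set y := (frobeniusEquiv C p).symm (x : C) with hy
    have hyp : y ^ p = (x : C) := by
      have h0 := frobenius_apply_frobeniusEquiv_symm C p (x : C)
      rwa [frobenius_def] at h0
    have hnorm : ‖y‖ ≤ 1 := by
      have hp : p ≠ 0 := (Fact.out : p.Prime).ne_zero
      have h1 : ‖y‖ ^ p ≤ 1 := by rw [← norm_pow, hyp]; exact x.2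
      exact (pow_le_one_iff_of_nonneg (norm_nonneg y) hp).mp h1
    refine ⟨⟨y, hnorm⟩, ?_⟩
    apply Subtype.ext
    simpa [frobenius_def] using hyp

theorem statement15 (p : ℕ) [Fact p.Prime] (C : Type) [NontriviallyNormedField C]
    [CharP C p] [PerfectRing C p] [CompleteSpace C]
    (hna : IsNonarchimedean (norm : C → ℝ))
    (ϖ : OC C hna) (hϖ0 : ϖ ≠ 0) (hϖ : ‖(ϖ : C)‖ < 1)
    -- the canonical localization maps `W(O_C)[1/p] → W(O_C)[1/(p·[ϖ])]` and
    -- `W(O_C)[1/[ϖ]] → W(O_C)[1/(p·[ϖ])]`, characterized by compatibility with the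
    -- localization maps from `W(O_C)`
    (f : Localization.Away ((p : WittVector p (OC C hna))) →+*
      Localization.Away ((p : WittVector p (OC C hna)) * WittVector.teichmuller p ϖ))
    (hf : f.comp (algebraMap (WittVector p (OC C hna))
        (Localization.Away ((p : WittVector p (OC C hna))))) =
      algebraMap (WittVector p (OC C hna))
        (Localization.Away ((p : WittVector p (OC C hna)) * WittVector.teichmuller p ϖ)))
    (g : Localization.Away (WittVector.teichmuller p ϖ) →+*
      Localization.Away ((p : WittVector p (OC C hna)) * WittVector.teichmuller p ϖ))
    (hg : g.comp (algebraMap (WittVector p (OC C hna))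
        (Localization.Away (WittVector.teichmuller p ϖ))) =
      algebraMap (WittVector p (OC C hna))
        (Localization.Away ((p : WittVector p (OC C hna)) * WittVector.teichmuller p ϖ))) :
    -- injectivity of the map to the fiber product
    (∀ a b : WittVector p (OC C hna),
      algebraMap _ (Localization.Away ((p : WittVector p (OC C hna)))) a =
        algebraMap _ _ b →
      algebraMap _ (Localization.Away (WittVector.teichmuller p ϖ)) a =
        algebraMap _ _ b →
      a = b) ∧
    -- surjectivity onto the fiber product
    (∀ (u : Localization.Away ((p : WittVector p (OC C hna))))
      (v : Localization.Away (WittVector.teichmuller p ϖ)), f u = g v →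
      ∃ a : WittVector p (OC C hna),
        algebraMap _ _ a = u ∧ algebraMap _ _ a = v) := by
  haveI : PerfectRing (OC C hna) p := OC_perfect p C hna
  have hq : (p : WittVector p (OC C hna)) ≠ 0 := aux_p_ne_zero
  have ht : WittVector.teichmuller p ϖ ≠ 0 := by
    intro h
    apply hϖ0
    have h0 := congrArg (fun z : WittVector p (OC C hna) => z.coeff 0) h
    simpa [WittVector.teichmuller_coeff_zero, WittVector.zero_coeff] using h0
  have hqt : (p : WittVector p (OC C hna)) * WittVector.teichmuller p ϖ ≠ 0 :=
    mul_ne_zero hq ht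
  constructor
  · intro a b h1 _
    exact IsLocalization.injective
      (Localization.Away ((p : WittVector p (OC C hna))))
      (powers_le_nonZeroDivisors_of_noZeroDivisors hq) h1
  · intro u v huv
    obtain ⟨⟨a, s⟩, hs⟩ :=
      IsLocalization.surj (Submonoid.powers ((p : WittVector p (OC C hna)))) u
    obtain ⟨n, hn⟩ := s.2
    obtain ⟨⟨b, s'⟩, hs'⟩ :=
      IsLocalization.surj (Submonoid.powers (WittVector.teichmuller p ϖ)) v
    obtain ⟨m, hm⟩ := s'.2
    have hfalg : ∀ x, f (algebraMap _ _ x) = algebraMap (WittVector p (OC C hna))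
        (Localization.Away ((p : WittVector p (OC C hna)) * WittVector.teichmuller p ϖ)) x :=
      fun x => RingHom.congr_fun hf x
    have hgalg : ∀ x, g (algebraMap _ _ x) = algebraMap (WittVector p (OC C hna))
        (Localization.Away ((p : WittVector p (OC C hna)) * WittVector.teichmuller p ϖ)) x :=
      fun x => RingHom.congr_fun hg x
    have hfu : f u * algebraMap _ _ ((p : WittVector p (OC C hna)) ^ n)
        = algebraMap _ _ a := by
      have h2 := congrArg f hs
      rw [map_mul, hfalg, hfalg] at h2
      rw [← hn] at h2
      exact h2
    have hgv : g v * algebraMap _ _ (WittVector.teichmuller p ϖ ^ m)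
        = algebraMap _ _ b := by
      have h2 := congrArg g hs'
      rw [map_mul, hgalg, hgalg] at h2
      rw [← hm] at h2
      exact h2
    have key_eq : WittVector.teichmuller p ϖ ^ m * a
        = (p : WittVector p (OC C hna)) ^ n * b := by
      apply IsLocalization.injective
        (Localization.Away ((p : WittVector p (OC C hna)) * WittVector.teichmuller p ϖ))
        (powers_le_nonZeroDivisors_of_noZeroDivisors hqt)
      rw [map_mul, map_mul]
      calc algebraMap _ _ (WittVector.teichmuller p ϖ ^ m) * algebraMap _ _ a
          = algebraMap _ _ (WittVector.teichmuller p ϖ ^ m)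
            * (f u * algebraMap _ _ ((p : WittVector p (OC C hna)) ^ n)) := by rw [hfu]
        _ = algebraMap _ _ ((p : WittVector p (OC C hna)) ^ n)
            * (g v * algebraMap _ _ (WittVector.teichmuller p ϖ ^ m)) := by rw [huv]; ring
        _ = algebraMap _ _ ((p : WittVector p (OC C hna)) ^ n) * algebraMap _ _ b := by
            rw [hgv]
    obtain ⟨c, hc⟩ := aux_key hϖ0 n m a b key_eq
    have hb : b = WittVector.teichmuller p ϖ ^ m * c := by
      have h4 : (p : WittVector p (OC C hna)) ^ n * (WittVector.teichmuller p ϖ ^ m * c)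
          = (p : WittVector p (OC C hna)) ^ n * b := by
        rw [← key_eq, hc]; ring
      exact (mul_left_cancel₀ (pow_ne_zero n hq) h4).symm
    refine ⟨c, ?_, ?_⟩
    · have hU : IsUnit (algebraMap (WittVector p (OC C hna))
          (Localization.Away ((p : WittVector p (OC C hna))))
          ((p : WittVector p (OC C hna)) ^ n)) :=
        IsLocalization.map_units _
          (⟨(p : WittVector p (OC C hna)) ^ n, Submonoid.pow_mem _ (Submonoid.mem_powers _) n⟩ :
            Submonoid.powers ((p : WittVector p (OC C hna))))
      have hn' : (p : WittVector p (OC C hna)) ^ n = (s : WittVector p (OC C hna)) := hn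
      apply hU.mul_left_cancel
      rw [← map_mul, ← hc, hn']
      rw [mul_comm]; exact hs.symm
    · have hU : IsUnit (algebraMap (WittVector p (OC C hna))
          (Localization.Away (WittVector.teichmuller p ϖ))
          (WittVector.teichmuller p ϖ ^ m)) :=
        IsLocalization.map_units _
          (⟨WittVector.teichmuller p ϖ ^ m, Submonoid.pow_mem _ (Submonoid.mem_powers _) m⟩ :
            Submonoid.powers (WittVector.teichmuller p ϖ))
      have hm' : WittVector.teichmuller p ϖ ^ m = (s' : WittVector p (OC C hna)) := hm
      apply hU.mul_left_cancel
      rw [← map_mul, ← hb, hm']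
      rw [mul_comm]; exact hs'.symm
end
end

section
/- Let ϖ ∈ m_C be a nonzero element and let A = O_C[[X]]. Then the commutative square formed by the canonical localization maps A → A[1/X], A → A[1/ϖ], A[1/X] → A[1/(X·ϖ)] and A[1/ϖ] → A[1/(X·ϖ)] is a pullback square of commutative rings; equivalently, the canonical ring homomorphism from A to the fiber product A[1/X] ×_{A[1/(X·ϖ)]} A[1/ϖ] is bijective. -/
/-!
A compatible pair `u = a / Xⁿ ∈ A[1/X]`, `v = b / ϖᵐ ∈ A[1/ϖ]` gives `a ϖᵐ = b Xⁿ` in `A`,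
because `A = O_C[[X]]` is a domain and so embeds in `A[1/(X·ϖ)]`. Comparing coefficients below
degree `n`, and using that `ϖ` is not a zero divisor, shows `Xⁿ ∣ a`; the quotient `a / Xⁿ` is
then the element of `A` inducing both `u` and `v`.
-/

noncomputable section

open nonZeroDivisors

namespace PowerSeries

theorem X_pow_dvd_of_dvd_mul_C {R : Type*} [Semiring R] {r : R} (hr : r ∈ R⁰)
    {n : ℕ} {a : R⟦X⟧} (h : X ^ n ∣ a * C r) : X ^ n ∣ a := by
  rw [X_pow_dvd_iff] at h ⊢
  intro i hi
  simpa [coeff_mul_C, mul_right_mem_nonZeroDivisors_eq_zero_iff hr] using h i hi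

end PowerSeries

theorem Localization.Away.exists_algebraMap_eq_of_map_eq {R : Type*} [CommRing R] {x y : R}
    (hx : x ∈ R⁰) (hy : y ∈ R⁰) (hdvd : ∀ (n m : ℕ) (a : R), x ^ n ∣ a * y ^ m → x ^ n ∣ a)
    {f : Localization.Away x →+* Localization.Away (x * y)}
    (hf : f.comp (algebraMap R _) = algebraMap R _)
    {g : Localization.Away y →+* Localization.Away (x * y)}
    (hg : g.comp (algebraMap R _) = algebraMap R _)
    {u : Localization.Away x} {v : Localization.Away y} (huv : f u = g v) :
    ∃ c : R, algebraMap R _ c = u ∧ algebraMap R _ c = v := by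
  obtain ⟨n, a, hu⟩ := IsLocalization.Away.surj x u
  obtain ⟨m, b, hv⟩ := IsLocalization.Away.surj y v
  have hfu : f u * algebraMap R _ x ^ n = algebraMap R (Localization.Away (x * y)) a := by
    simpa [← RingHom.comp_apply, hf] using congrArg f hu
  have hgv : g v * algebraMap R _ y ^ m = algebraMap R (Localization.Away (x * y)) b := by
    simpa [← RingHom.comp_apply, hg] using congrArg g hv
  have hcross : a * y ^ m = b * x ^ n := by
    refine IsLocalization.injective (Localization.Away (x * y))
      (Submonoid.powers_le.mpr (mul_mem hx hy)) ?_
    rw [map_mul, map_mul, map_pow, map_pow, ← hfu, ← hgv, huv]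
    ring
  obtain ⟨c, rfl⟩ := hdvd n m a ⟨b, by rw [hcross, mul_comm]⟩
  have hcb : c * y ^ m = b := by
    refine (mul_cancel_left_mem_nonZeroDivisors (pow_mem hx n)).mp ?_
    rw [← mul_assoc, hcross, mul_comm]
  refine ⟨c, ?_, ?_⟩
  · refine ((IsLocalization.Away.algebraMap_isUnit x).pow n).mul_right_cancel ?_
    rw [hu, ← map_pow, ← map_mul, mul_comm]
  · refine ((IsLocalization.Away.algebraMap_isUnit y).pow m).mul_right_cancel ?_
    rw [hv, ← map_pow, ← map_mul, hcb]

theorem statement16_general (C : Type) [NontriviallyNormedField C]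
    (hna : IsNonarchimedean (norm : C → ℝ))
    (ϖ : OC C hna) (hϖ0 : ϖ ≠ 0)
    -- the canonical localization maps `A[1/X] → A[1/(X·ϖ)]` and `A[1/ϖ] → A[1/(X·ϖ)]`,
    -- characterized by compatibility with the localization maps from `A = O_C[[X]]`
    (f : Localization.Away (PowerSeries.X : PowerSeries (OC C hna)) →+*
      Localization.Away
        ((PowerSeries.X : PowerSeries (OC C hna)) * PowerSeries.C ϖ))
    (hf : f.comp (algebraMap (PowerSeries (OC C hna))
        (Localization.Away (PowerSeries.X : PowerSeries (OC C hna)))) =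
      algebraMap (PowerSeries (OC C hna))
        (Localization.Away
          ((PowerSeries.X : PowerSeries (OC C hna)) * PowerSeries.C ϖ)))
    (g : Localization.Away (PowerSeries.C ϖ) →+*
      Localization.Away
        ((PowerSeries.X : PowerSeries (OC C hna)) * PowerSeries.C ϖ))
    (hg : g.comp (algebraMap (PowerSeries (OC C hna))
        (Localization.Away (PowerSeries.C ϖ))) =
      algebraMap (PowerSeries (OC C hna))
        (Localization.Away
          ((PowerSeries.X : PowerSeries (OC C hna)) * PowerSeries.C ϖ))) :
    -- injectivity of the map to the fiber product
    (∀ a b : PowerSeries (OC C hna),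
      algebraMap _ (Localization.Away (PowerSeries.X : PowerSeries (OC C hna))) a =
        algebraMap _ _ b →
      algebraMap _ (Localization.Away (PowerSeries.C ϖ)) a =
        algebraMap _ _ b →
      a = b) ∧
    -- surjectivity onto the fiber product
    (∀ (u : Localization.Away (PowerSeries.X : PowerSeries (OC C hna)))
      (v : Localization.Away (PowerSeries.C ϖ)), f u = g v →
      ∃ a : PowerSeries (OC C hna),
        algebraMap _ _ a = u ∧ algebraMap _ _ a = v) := by
  have hX : (PowerSeries.X : PowerSeries (OC C hna)) ∈ (PowerSeries (OC C hna))⁰ :=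
    mem_nonZeroDivisors_of_ne_zero PowerSeries.X_ne_zero
  have hCϖ : PowerSeries.C ϖ ∈ (PowerSeries (OC C hna))⁰ :=
    mem_nonZeroDivisors_of_ne_zero ((map_ne_zero_iff _ PowerSeries.C_injective).mpr hϖ0)
  refine ⟨fun a b hab _ ↦ IsLocalization.injective _ (Submonoid.powers_le.mpr hX) hab,
    fun u v huv ↦ Localization.Away.exists_algebraMap_eq_of_map_eq hX hCϖ ?_ hf hg huv⟩
  intro n m a h
  rw [← map_pow] at h
  exact PowerSeries.X_pow_dvd_of_dvd_mul_C
    (mem_nonZeroDivisors_of_ne_zero (pow_ne_zero m hϖ0)) h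

theorem statement16 (p : ℕ) [Fact p.Prime] (C : Type) [NontriviallyNormedField C]
    [CharP C p] [PerfectRing C p] [CompleteSpace C]
    (hna : IsNonarchimedean (norm : C → ℝ))
    (ϖ : OC C hna) (hϖ0 : ϖ ≠ 0) (hϖ : ‖(ϖ : C)‖ < 1)
    -- the canonical localization maps `A[1/X] → A[1/(X·ϖ)]` and `A[1/ϖ] → A[1/(X·ϖ)]`,
    -- characterized by compatibility with the localization maps from `A = O_C[[X]]`
    (f : Localization.Away (PowerSeries.X : PowerSeries (OC C hna)) →+*
      Localization.Away
        ((PowerSeries.X : PowerSeries (OC C hna)) * PowerSeries.C ϖ))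
    (hf : f.comp (algebraMap (PowerSeries (OC C hna))
        (Localization.Away (PowerSeries.X : PowerSeries (OC C hna)))) =
      algebraMap (PowerSeries (OC C hna))
        (Localization.Away
          ((PowerSeries.X : PowerSeries (OC C hna)) * PowerSeries.C ϖ)))
    (g : Localization.Away (PowerSeries.C ϖ) →+*
      Localization.Away
        ((PowerSeries.X : PowerSeries (OC C hna)) * PowerSeries.C ϖ))
    (hg : g.comp (algebraMap (PowerSeries (OC C hna))
        (Localization.Away (PowerSeries.C ϖ))) =
      algebraMap (PowerSeries (OC C hna))
        (Localization.Away
          ((PowerSeries.X : PowerSeries (OC C hna)) * PowerSeries.C ϖ))) :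
    -- injectivity of the map to the fiber product
    (∀ a b : PowerSeries (OC C hna),
      algebraMap _ (Localization.Away (PowerSeries.X : PowerSeries (OC C hna))) a =
        algebraMap _ _ b →
      algebraMap _ (Localization.Away (PowerSeries.C ϖ)) a =
        algebraMap _ _ b →
      a = b) ∧
    -- surjectivity onto the fiber product
    (∀ (u : Localization.Away (PowerSeries.X : PowerSeries (OC C hna)))
      (v : Localization.Away (PowerSeries.C ϖ)), f u = g v →
      ∃ a : PowerSeries (OC C hna),
        algebraMap _ _ a = u ∧ algebraMap _ _ a = v) :=
  statement16_general C hna ϖ hϖ0 f hf g hg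
end
end

section
/- The Krull dimension of the ring O_C[[X]] is at least 3. -/
/-!
The chain is `0 ⊊ 𝔭₁ ⊊ 𝔭_crys ⊊ 𝔪`. Two of these primes are kernels: `𝔭_crys` of the reduction
`O_C[[X]] → (O_C/𝔪_C)[[X]]`, and `𝔪` of `O_C[[X]] → O_C/𝔪_C`. The subtle one is `𝔭₁`, the
series whose coefficients all have norm at most some `r < 1`. For `0 < r < 1` the weights
`|aₙ| rⁿ` of `f = ∑ aₙ Xⁿ` tend to `0`, so they attain a first maximum, and the product of the
first maxima for `f` and `g` strictly dominates its antidiagonal in `fg`; hence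
`max_n |cₙ(fg)| rⁿ ≥ max_n |aₙ| rⁿ · max_n |bₙ| rⁿ`. If `f, g ∉ 𝔭₁`, both have coefficients of
norm arbitrarily close to `1`, and taking `r` close to `1` gives the same for `fg`.
The inclusions are strict: `ϖ ∈ 𝔭₁`, `∑ ϖ^{1/(n+1)} Xⁿ ∈ 𝔭_crys ∖ 𝔭₁` (the roots exist as `C` is
algebraically closed), and `X ∈ 𝔪 ∖ 𝔭_crys`.
-/

noncomputable section

open Filter Topology PowerSeries
open Finset.HasAntidiagonal (antidiagonal mem_antidiagonal)

theorem three_le_ringKrullDim_of_lt_lt_lt {R : Type*} [CommRing R] {P₀ P₁ P₂ P₃ : Ideal R}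
    [hP₀ : P₀.IsPrime] [hP₁ : P₁.IsPrime] [hP₂ : P₂.IsPrime] [hP₃ : P₃.IsPrime]
    (h₀₁ : P₀ < P₁) (h₁₂ : P₁ < P₂) (h₂₃ : P₂ < P₃) :
    3 ≤ ringKrullDim R := by
  let chain : LTSeries (PrimeSpectrum R) :=
    ⟨3, ![⟨P₀, hP₀⟩, ⟨P₁, hP₁⟩, ⟨P₂, hP₂⟩, ⟨P₃, hP₃⟩], fun i => by
      fin_cases i
      exacts [h₀₁, h₁₂, h₂₃]⟩
  exact_mod_cast Order.LTSeries.length_le_krullDim chain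

def IsLeastArgmax (w : ℕ → ℝ) (N : ℕ) : Prop :=
  (∀ k, w k ≤ w N) ∧ ∀ k < N, w k < w N

theorem exists_isLeastArgmax_of_tendsto_zero {w : ℕ → ℝ} (hw : Tendsto w atTop (𝓝 0)) {i : ℕ}
    (hi : 0 < w i) : ∃ N, IsLeastArgmax w N := by
  classical
  have hmax : ∃ N, ∀ k, w k ≤ w N :=
    continuous_of_discreteTopology.exists_forall_ge' i <| by
      rw [cocompact_eq_atTop]
      exact (hw.eventually (gt_mem_nhds hi)).mono fun _ => le_of_lt
  refine ⟨Nat.find hmax, Nat.find_spec hmax, fun k hk => ?_⟩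
  obtain ⟨m, hm⟩ := not_forall.mp (Nat.find_min hmax hk)
  exact (not_le.mp hm).trans_le (Nat.find_spec hmax m)

theorem exists_lt_mul_pow_of_lt {u c : ℝ} (h : u < c) (m : ℕ) :
    ∃ r, 0 < r ∧ r < 1 ∧ u < c * r ^ m := by
  have hcont : Tendsto (fun r : ℝ => c * r ^ m) (𝓝[<] 1) (𝓝 c) := by
    simpa using ((by fun_prop : Continuous fun r : ℝ => c * r ^ m).tendsto 1).mono_left
      nhdsWithin_le_nhds
  obtain ⟨r, hu, hr₀, hr₁⟩ :=
    ((hcont.eventually (lt_mem_nhds h)).and (Ioo_mem_nhdsLT zero_lt_one)).exists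
  exact ⟨r, hr₀, hr₁, hu⟩

theorem norm_sum_antidiagonal_eq_of_isLeastArgmax {K : Type*} [NormedField K]
    (hna : IsNonarchimedean (norm : K → ℝ)) {a b : ℕ → K} {r : ℝ} (hr : 0 < r) {N M : ℕ}
    (hN : IsLeastArgmax (fun n => ‖a n‖ * r ^ n) N)
    (hM : IsLeastArgmax (fun n => ‖b n‖ * r ^ n) M)
    (hN₀ : 0 < ‖a N‖ * r ^ N) (hM₀ : 0 < ‖b M‖ * r ^ M) :
    ‖∑ p ∈ antidiagonal (N + M), a p.1 * b p.2‖ = ‖a N * b M‖ := by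
  refine hna.apply_sum_eq_of_lt (fun x => (norm_neg x).symm) (k := (N, M))
    (mem_antidiagonal.mpr rfl) ?_
  rintro ⟨k, l⟩ hkl hne
  rw [mem_antidiagonal] at hkl
  have hweights : (‖a k‖ * r ^ k) * (‖b l‖ * r ^ l) < (‖a N‖ * r ^ N) * (‖b M‖ * r ^ M) := by
    rcases lt_or_ge k N with hk | hk
    · exact mul_lt_mul_of_lt_of_le_of_nonneg_of_pos (hN.2 k hk) (hM.1 l) (by positivity) hM₀
    · have hl : l < M := by
        by_contra! hl
        exact hne (Prod.ext (by dsimp; omega) (by dsimp; omega))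
      exact mul_lt_mul' (hN.1 k) (hM.2 l hl) (by positivity) hN₀
  have hpow : r ^ k * r ^ l = r ^ N * r ^ M := by rw [← pow_add, ← pow_add, hkl]
  rw [norm_mul, norm_mul]
  refine lt_of_mul_lt_mul_right (a := r ^ N * r ^ M) ?_ (by positivity)
  calc ‖a k‖ * ‖b l‖ * (r ^ N * r ^ M) = (‖a k‖ * r ^ k) * (‖b l‖ * r ^ l) := by
        rw [← hpow]; ring
    _ < (‖a N‖ * r ^ N) * (‖b M‖ * r ^ M) := hweights
    _ = ‖a N‖ * ‖b M‖ * (r ^ N * r ^ M) := by ring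

namespace OC

section NormedField

variable {K : Type} [NormedField K] {hna : IsNonarchimedean (norm : K → ℝ)}

theorem norm_coe_le_one (x : OC K hna) : ‖(x : K)‖ ≤ 1 := x.2

variable (hna) in
def maximalIdeal : Ideal (OC K hna) where
  carrier := {x | ‖(x : K)‖ < 1}
  add_mem' {x y} hx hy := (hna x y).trans_lt (max_lt hx hy)
  zero_mem' := by simp
  smul_mem' c x hx := by
    simpa [norm_mul] using mul_lt_one_of_nonneg_of_lt_one_right (norm_coe_le_one c)
      (norm_nonneg _) hx

theorem mem_maximalIdeal {x : OC K hna} : x ∈ maximalIdeal hna ↔ ‖(x : K)‖ < 1 := Iff.rfl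

instance isPrime_maximalIdeal : (maximalIdeal hna).IsPrime := by
  refine Ideal.isPrime_iff.mpr ⟨fun h => ?_, fun {x y} hxy => ?_⟩
  · simpa [mem_maximalIdeal] using (Ideal.eq_top_iff_one _).mp h
  · simp only [mem_maximalIdeal, Subring.coe_mul, norm_mul] at hxy ⊢
    by_contra! h
    exact hxy.not_ge (one_le_mul_of_one_le_of_one_le h.1 h.2)

theorem coe_coeff_mul (f g : PowerSeries (OC K hna)) (n : ℕ) :
    (↑(coeff n (f * g)) : K) = ∑ p ∈ antidiagonal n, (↑(coeff p.1 f) : K) * coeff p.2 g := by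
  simp [coeff_mul]

theorem tendsto_norm_coeff_mul_pow (f : PowerSeries (OC K hna)) {r : ℝ} (hr₀ : 0 ≤ r)
    (hr₁ : r < 1) : Tendsto (fun n => ‖(↑(coeff n f) : K)‖ * r ^ n) atTop (𝓝 0) :=
  squeeze_zero (fun n => by positivity)
    (fun n => mul_le_of_le_one_left (by positivity) (norm_coe_le_one _))
    (tendsto_pow_atTop_nhds_zero_of_lt_one hr₀ hr₁)

theorem exists_norm_coeff_mul_pow_ge (f g : PowerSeries (OC K hna)) {r : ℝ} (hr₀ : 0 < r)
    (hr₁ : r < 1) {i j : ℕ} (hi : 0 < ‖(↑(coeff i f) : K)‖) (hj : 0 < ‖(↑(coeff j g) : K)‖) :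
    ∃ n, ‖(↑(coeff i f) : K)‖ * r ^ i * (‖(↑(coeff j g) : K)‖ * r ^ j) ≤
      ‖(↑(coeff n (f * g)) : K)‖ * r ^ n := by
  obtain ⟨N, hN⟩ := exists_isLeastArgmax_of_tendsto_zero
    (tendsto_norm_coeff_mul_pow f hr₀.le hr₁) (i := i) (by positivity)
  obtain ⟨M, hM⟩ := exists_isLeastArgmax_of_tendsto_zero
    (tendsto_norm_coeff_mul_pow g hr₀.le hr₁) (i := j) (by positivity)
  have hfi : 0 < ‖(↑(coeff i f) : K)‖ * r ^ i := by positivity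
  have hgj : 0 < ‖(↑(coeff j g) : K)‖ * r ^ j := by positivity
  refine ⟨N + M, ?_⟩
  rw [coe_coeff_mul, norm_sum_antidiagonal_eq_of_isLeastArgmax hna hr₀ hN hM
    (hfi.trans_le (hN.1 i)) (hgj.trans_le (hM.1 j)), norm_mul, pow_add]
  calc _ ≤ ‖(↑(coeff N f) : K)‖ * r ^ N * (‖(↑(coeff M g) : K)‖ * r ^ M) :=
        mul_le_mul (hN.1 i) (hM.1 j) hgj.le (hfi.le.trans (hN.1 i))
    _ = _ := by ring

-- Over an algebraically closed `K` this is `𝔭₁ = ⋃_{ϖ ∈ 𝔪_K} ϖ·O_K[[X]]`.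
variable (hna) in
def gaussNormLtOne : Ideal (PowerSeries (OC K hna)) where
  carrier := {f | ∃ r < 1, ∀ n, ‖(↑(coeff n f) : K)‖ ≤ r}
  add_mem' := by
    rintro f g ⟨r, hr, hf⟩ ⟨s, hs, hg⟩
    exact ⟨max r s, max_lt hr hs, fun n => (hna _ _).trans (max_le_max (hf n) (hg n))⟩
  zero_mem' := ⟨0, zero_lt_one, by simp⟩
  smul_mem' := by
    rintro c f ⟨r, hr, hf⟩
    have := IsUltrametricDist.isUltrametricDist_of_isNonarchimedean_norm hna
    refine ⟨r, hr, fun n => ?_⟩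
    rw [smul_eq_mul, coe_coeff_mul]
    refine IsUltrametricDist.norm_sum_le_of_forall_le_of_nonneg ((norm_nonneg _).trans (hf 0))
      fun p _ => ?_
    rw [norm_mul]
    exact (mul_le_of_le_one_left (norm_nonneg _) (norm_coe_le_one _)).trans (hf _)

theorem mem_gaussNormLtOne {f : PowerSeries (OC K hna)} :
    f ∈ gaussNormLtOne hna ↔ ∃ r < 1, ∀ n, ‖(↑(coeff n f) : K)‖ ≤ r := Iff.rfl

instance isPrime_gaussNormLtOne : (gaussNormLtOne hna).IsPrime := by
  refine Ideal.isPrime_iff.mpr ⟨fun h => ?_, fun {f g} hfg => ?_⟩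
  · obtain ⟨r, hr, h1⟩ := (Ideal.eq_top_iff_one _).mp h
    simpa using (h1 0).trans_lt hr
  obtain ⟨u, hu, hfgu⟩ := hfg
  by_contra! hfg'
  simp only [mem_gaussNormLtOne, not_exists, not_and, not_forall, not_le] at hfg'
  have hu₀ : 0 ≤ u := (norm_nonneg _).trans (hfgu 0)
  obtain ⟨i, hi⟩ := hfg'.1 u hu
  have hfi : 0 < ‖(↑(coeff i f) : K)‖ := hu₀.trans_lt hi
  obtain ⟨j, hj⟩ := hfg'.2 (u / ‖(↑(coeff i f) : K)‖) ((div_lt_one hfi).mpr hi)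
  have hgj : 0 < ‖(↑(coeff j g) : K)‖ := (div_nonneg hu₀ hfi.le).trans_lt hj
  obtain ⟨r, hr₀, hr₁, hr⟩ := exists_lt_mul_pow_of_lt ((div_lt_iff₀' hfi).mp hj) (i + j)
  obtain ⟨n, hn⟩ := exists_norm_coeff_mul_pow_ge f g hr₀ hr₁ hfi hgj
  have hn' : ‖(↑(coeff n (f * g)) : K)‖ * r ^ n ≤ u :=
    (mul_le_of_le_one_right (norm_nonneg _) (pow_le_one₀ hr₀.le hr₁.le)).trans (hfgu n)
  rw [pow_add] at hr
  linarith

variable (hna) in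
def reductionKer : Ideal (PowerSeries (OC K hna)) :=
  RingHom.ker (PowerSeries.map (Ideal.Quotient.mk (maximalIdeal hna)))

instance isPrime_reductionKer : (reductionKer hna).IsPrime := RingHom.ker_isPrime _

theorem mem_reductionKer {f : PowerSeries (OC K hna)} :
    f ∈ reductionKer hna ↔ ∀ n, ‖(↑(coeff n f) : K)‖ < 1 := by
  simp [reductionKer, RingHom.mem_ker, PowerSeries.ext_iff, Ideal.Quotient.eq_zero_iff_mem,
    mem_maximalIdeal]

theorem gaussNormLtOne_le_reductionKer : gaussNormLtOne hna ≤ reductionKer hna :=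
  fun _ ⟨_, hr, hf⟩ => mem_reductionKer.mpr fun n => (hf n).trans_lt hr

theorem reductionKer_lt_comap_constantCoeff :
    reductionKer hna < (maximalIdeal hna).comap constantCoeff := by
  refine SetLike.lt_iff_le_and_exists.mpr ⟨fun f hf => ?_, X, by simp, fun h => ?_⟩
  · simpa [mem_maximalIdeal] using mem_reductionKer.mp hf 0
  · simpa using mem_reductionKer.mp h 1

end NormedField

section NontriviallyNormedField

variable {K : Type} [NontriviallyNormedField K] {hna : IsNonarchimedean (norm : K → ℝ)}

theorem bot_lt_gaussNormLtOne : ⊥ < gaussNormLtOne hna := by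
  obtain ⟨ϖ, hϖ₀, hϖ₁⟩ := NormedField.exists_norm_lt_one K
  refine SetLike.lt_iff_le_and_exists.mpr
    ⟨bot_le, C ⟨ϖ, hϖ₁.le⟩, ⟨‖ϖ‖, hϖ₁, fun n => ?_⟩, ?_⟩
  · rw [coeff_C]
    split_ifs <;> simp [hϖ₀.le]
  · rw [Ideal.mem_bot, map_eq_zero_iff _ C_injective]
    exact fun h => hϖ₀.ne' (by simpa using congrArg Subtype.val h)

theorem gaussNormLtOne_lt_reductionKer [IsAlgClosed K] :
    gaussNormLtOne hna < reductionKer hna := by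
  obtain ⟨ϖ, hϖ₀, hϖ₁⟩ := NormedField.exists_norm_lt_one K
  choose z hz using fun n : ℕ => IsAlgClosed.exists_pow_nat_eq ϖ n.succ_pos
  have hz₁ (n : ℕ) : ‖z n‖ < 1 :=
    (pow_lt_one_iff_of_nonneg (norm_nonneg _) n.succ_ne_zero).mp (by rwa [← norm_pow, hz])
  refine SetLike.lt_iff_le_and_exists.mpr ⟨gaussNormLtOne_le_reductionKer,
    mk fun n => ⟨z n, (hz₁ n).le⟩, mem_reductionKer.mpr fun n => by simpa using hz₁ n, ?_⟩
  rintro ⟨r, hr₁, hzr⟩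
  have hr₀ : 0 ≤ r := (norm_nonneg _).trans (hzr 0)
  obtain ⟨n, hn⟩ := exists_pow_lt_of_lt_one hϖ₀ hr₁
  have hzn : ‖z n‖ ≤ r := by simpa using hzr n
  refine lt_irrefl ‖ϖ‖ ?_
  calc ‖ϖ‖ = ‖z n‖ ^ (n + 1) := by rw [← norm_pow, hz]
    _ ≤ r ^ (n + 1) := pow_le_pow_left₀ (norm_nonneg _) hzn _
    _ ≤ r ^ n := pow_le_pow_of_le_one hr₀ hr₁.le n.le_succ
    _ < ‖ϖ‖ := hn

end NontriviallyNormedField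

end OC

theorem statement17_general (C : Type) [NontriviallyNormedField C]
    [IsAlgClosed C]
    (hna : IsNonarchimedean (norm : C → ℝ)) :
    3 ≤ ringKrullDim (PowerSeries (OC C hna)) :=
  three_le_ringKrullDim_of_lt_lt_lt OC.bot_lt_gaussNormLtOne OC.gaussNormLtOne_lt_reductionKer
    OC.reductionKer_lt_comap_constantCoeff

theorem statement17 (p : ℕ) [Fact p.Prime] (C : Type) [NontriviallyNormedField C]
    [IsAlgClosed C] [CharP C p] [CompleteSpace C]
    (hna : IsNonarchimedean (norm : C → ℝ)) :
    3 ≤ ringKrullDim (PowerSeries (OC C hna)) :=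
  statement17_general C hna
end
end
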